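/- arXiv:1905.05805 — 12 statements merged into one kernel-verified Lean document; each statement's English description precedes it below -/
import Mathlib

section
/- Let f be C² on [a,b]×[c,d] and let φ(x,y) = (x−m₁)(y−m₂) where m₁ = (a+b)/2 and m₂ = (c+d)/2. Then ∫_a^b∫_c^d f(x,y) dy dx = [f(a,c)+f(b,d)+f(a,d)+f(b,c)]·(b−a)(d−c)/4 + E(f), where E(f) = ∫_a^b [f_x(x,c)φ(x,c) − f_x(x,d)φ(x,d)] dx + ∫_c^d [f_y(a,y)φ(a,y) − f_y(b,y)φ(b,y)] dy + ∫_a^b∫_c^d f_{xy}(x,y)φ(x,y) dy dx. -/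
open MeasureTheory Set

/-- 1D integration by parts against `(y - m)`. -/
lemma trap_parts {p q : ℝ} (hpq : p ≤ q) (m : ℝ) (g h : ℝ → ℝ)
    (hg : ∀ y ∈ Icc p q, HasDerivAt g (h y) y)
    (hh : ContinuousOn h (Icc p q)) :
    ∫ y in p..q, (y - m) * h y
      = (q - m) * g q - (p - m) * g p - ∫ y in p..q, g y := by
  have huIcc : uIcc p q = Icc p q := uIcc_of_le hpq
  have h1 : ∀ y ∈ uIcc p q, HasDerivAt (fun y => y - m) ((fun _ => (1:ℝ)) y) y :=
    fun y _ => (hasDerivAt_id y).sub_const m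
  have h2 : ∀ y ∈ uIcc p q, HasDerivAt g (h y) y := by rw [huIcc]; exact hg
  have hhint : IntervalIntegrable h volume p q := by
    apply ContinuousOn.intervalIntegrable; rwa [huIcc]
  have := intervalIntegral.integral_mul_deriv_eq_deriv_mul h1 h2
    intervalIntegrable_const hhint
  simpa using this

lemma slice_left {s t : Set ℝ} {F : ℝ → ℝ → ℝ}
    (hF : ContinuousOn (fun p : ℝ × ℝ => F p.1 p.2) (s ×ˢ t)) {x : ℝ} (hx : x ∈ s) :
    ContinuousOn (fun y => F x y) t :=
  hF.comp ((continuous_const.prodMk continuous_id).continuousOn) (fun y hy => ⟨hx, hy⟩)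

lemma slice_right {s t : Set ℝ} {F : ℝ → ℝ → ℝ}
    (hF : ContinuousOn (fun p : ℝ × ℝ => F p.1 p.2) (s ×ˢ t)) {y : ℝ} (hy : y ∈ t) :
    ContinuousOn (fun x => F x y) s :=
  hF.comp ((continuous_id.prodMk continuous_const).continuousOn) (fun x hx => ⟨hx, hy⟩)

lemma prod_integrable {a b c d : ℝ} (F : ℝ → ℝ → ℝ)
    (hF : ContinuousOn (fun p : ℝ × ℝ => F p.1 p.2) (Icc a b ×ˢ Icc c d)) :
    Integrable (fun p : ℝ × ℝ => F p.1 p.2)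
      ((volume.restrict (Ioc a b)).prod (volume.restrict (Ioc c d))) := by
  have h1 : IntegrableOn (fun p : ℝ × ℝ => F p.1 p.2) (Icc a b ×ˢ Icc c d) :=
    hF.integrableOn_compact (isCompact_Icc.prod isCompact_Icc)
  have h2 : IntegrableOn (fun p : ℝ × ℝ => F p.1 p.2) (Ioc a b ×ˢ Ioc c d) :=
    h1.mono_set (prod_mono Ioc_subset_Icc_self Ioc_subset_Icc_self)
  rwa [IntegrableOn, Measure.volume_eq_prod, ← Measure.prod_restrict] at h2

lemma param_ii {a b c d : ℝ} (hab : a ≤ b) (hcd : c ≤ d) (F : ℝ → ℝ → ℝ)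
    (hF : ContinuousOn (fun p : ℝ × ℝ => F p.1 p.2) (Icc a b ×ˢ Icc c d)) :
    IntervalIntegrable (fun x => ∫ y in c..d, F x y) volume a b := by
  have h := (prod_integrable F hF).integral_prod_left
  rw [intervalIntegrable_iff_integrableOn_Ioc_of_le hab]
  have he : (fun x => ∫ y in c..d, F x y)
      = fun x => ∫ y, F x y ∂(volume.restrict (Ioc c d)) := by
    funext x; rw [intervalIntegral.integral_of_le hcd]
  rw [he]; exact h

lemma swap_ii {a b c d : ℝ} (hab : a ≤ b) (hcd : c ≤ d) (F : ℝ → ℝ → ℝ)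
    (hF : ContinuousOn (fun p : ℝ × ℝ => F p.1 p.2) (Icc a b ×ˢ Icc c d)) :
    ∫ x in a..b, ∫ y in c..d, F x y = ∫ y in c..d, ∫ x in a..b, F x y := by
  have h := MeasureTheory.integral_integral_swap (f := F) (prod_integrable F hF)
  rw [intervalIntegral.integral_of_le hab, intervalIntegral.integral_of_le hcd]
  simp_rw [intervalIntegral.integral_of_le hcd, intervalIntegral.integral_of_le hab]
  exact h

/-- Two-dimensional trapezoidal rule with explicit error term. -/
theorem stmt_1 (a b c d : ℝ) (hab : a < b) (hcd : c < d)
    (f fx fy fxy : ℝ → ℝ → ℝ)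
(hfC : ContinuousOn (fun p : ℝ × ℝ => f p.1 p.2) (Icc a b ×ˢ Icc c d))
    (hfx : ∀ x ∈ Icc a b, ∀ y ∈ Icc c d, HasDerivAt (fun x' => f x' y) (fx x y) x)
    (hfy : ∀ x ∈ Icc a b, ∀ y ∈ Icc c d, HasDerivAt (fun y' => f x y') (fy x y) y)
    (hfxy : ∀ x ∈ Icc a b, ∀ y ∈ Icc c d, HasDerivAt (fun y' => fx x y') (fxy x y) y)
    (hfxC : ContinuousOn (fun p : ℝ × ℝ => fx p.1 p.2) (Icc a b ×ˢ Icc c d))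
    (hfyC : ContinuousOn (fun p : ℝ × ℝ => fy p.1 p.2) (Icc a b ×ˢ Icc c d))
    (hfxyC : ContinuousOn (fun p : ℝ × ℝ => fxy p.1 p.2) (Icc a b ×ˢ Icc c d))
    (φ : ℝ → ℝ → ℝ)
    (hφ : ∀ x y : ℝ, φ x y = (x - (a + b) / 2) * (y - (c + d) / 2)) :
    (∫ x in a..b, ∫ y in c..d, f x y) =
      (f a c + f b d + f a d + f b c) * ((b - a) * (d - c) / 4)
      + ((∫ x in a..b, (fx x c * φ x c - fx x d * φ x d))
        + (∫ y in c..d, (fy a y * φ a y - fy b y * φ b y))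
        + ∫ x in a..b, ∫ y in c..d, fxy x y * φ x y) := by
  have hab' : a ≤ b := hab.le
  have hcd' : c ≤ d := hcd.le
  have hu1 : uIcc a b = Icc a b := uIcc_of_le hab'
  have hu2 : uIcc c d = Icc c d := uIcc_of_le hcd'
  have hamem : a ∈ Icc a b := left_mem_Icc.mpr hab'
  have hbmem : b ∈ Icc a b := right_mem_Icc.mpr hab'
  have hcmem : c ∈ Icc c d := left_mem_Icc.mpr hcd'
  have hdmem : d ∈ Icc c d := right_mem_Icc.mpr hcd'
  have hfswap : ContinuousOn (fun p : ℝ × ℝ => f p.2 p.1) (Icc c d ×ˢ Icc a b) :=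
    hfC.comp continuous_swap.continuousOn (fun p hp => ⟨hp.2, hp.1⟩)
  -- pointwise combination of the first error term with the double-integral error term
  have h1 : ∀ x ∈ Icc a b,
      (fx x c * φ x c - fx x d * φ x d) + (∫ y in c..d, fxy x y * φ x y)
        = -((x - (a + b) / 2) * ∫ y in c..d, fx x y) := by
    intro x hx
    have hp := trap_parts hcd' ((c + d) / 2) (fun y => fx x y) (fun y => fxy x y)
        (fun y hy => hfxy x hx y hy) (slice_left hfxyC hx)
    have e1 : (∫ y in c..d, fxy x y * φ x y)
        = (x - (a + b) / 2) * ∫ y in c..d, (y - (c + d) / 2) * fxy x y := by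
      rw [← intervalIntegral.integral_const_mul]
      apply intervalIntegral.integral_congr
      intro y hy
      simp only [hφ]; ring
    rw [e1, hp]
    simp only [hφ]; ring
  have i1 : IntervalIntegrable (fun x => fx x c * φ x c - fx x d * φ x d) volume a b := by
    apply ContinuousOn.intervalIntegrable
    rw [hu1]
    simp only [hφ]
    exact ((slice_right hfxC hcmem).mul (Continuous.continuousOn (by fun_prop))).sub
      ((slice_right hfxC hdmem).mul (Continuous.continuousOn (by fun_prop)))
  have i2 : IntervalIntegrable (fun x => ∫ y in c..d, fxy x y * φ x y) volume a b := by
    apply param_ii hab' hcd' (fun x y => fxy x y * φ x y)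
    show ContinuousOn (fun p : ℝ × ℝ => fxy p.1 p.2 * φ p.1 p.2) _
    simp only [hφ]
    exact hfxyC.mul (Continuous.continuousOn (by fun_prop))
  have jA : IntervalIntegrable (fun y => (b - (a + b) / 2) * f b y) volume c d := by
    apply ContinuousOn.intervalIntegrable
    rw [hu2]
    exact continuousOn_const.mul (slice_left hfC hbmem)
  have jB : IntervalIntegrable (fun y => (a - (a + b) / 2) * f a y) volume c d := by
    apply ContinuousOn.intervalIntegrable
    rw [hu2]
    exact continuousOn_const.mul (slice_left hfC hamem)
  have jint : IntervalIntegrable (fun y => ∫ x in a..b, f x y) volume c d :=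
    param_ii hcd' hab' (fun y x => f x y) hfswap
  have key :
      (∫ x in a..b, (fx x c * φ x c - fx x d * φ x d))
        + (∫ x in a..b, ∫ y in c..d, fxy x y * φ x y)
      = -((b - (a + b) / 2) * (∫ y in c..d, f b y)
          - (a - (a + b) / 2) * (∫ y in c..d, f a y)
          - ∫ x in a..b, ∫ y in c..d, f x y) := by
    calc (∫ x in a..b, (fx x c * φ x c - fx x d * φ x d))
          + (∫ x in a..b, ∫ y in c..d, fxy x y * φ x y)
        = ∫ x in a..b, ((fx x c * φ x c - fx x d * φ x d)
            + ∫ y in c..d, fxy x y * φ x y) := (intervalIntegral.integral_add i1 i2).symm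
      _ = ∫ x in a..b, -((x - (a + b) / 2) * ∫ y in c..d, fx x y) := by
          apply intervalIntegral.integral_congr
          intro x hx
          exact h1 x (hu1 ▸ hx)
      _ = -∫ x in a..b, ∫ y in c..d, ((x - (a + b) / 2) * fx x y) := by
          rw [← intervalIntegral.integral_neg]
          apply intervalIntegral.integral_congr
          intro x hx
          simp only [intervalIntegral.integral_const_mul]
      _ = -∫ y in c..d, ∫ x in a..b, ((x - (a + b) / 2) * fx x y) := by
          rw [swap_ii hab' hcd' (fun x y => (x - (a + b) / 2) * fx x y)
            ((Continuous.continuousOn (by fun_prop)).mul hfxC)]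
      _ = -∫ y in c..d, ((b - (a + b) / 2) * f b y - (a - (a + b) / 2) * f a y
            - ∫ x in a..b, f x y) := by
          congr 1
          apply intervalIntegral.integral_congr
          intro y hy
          exact trap_parts hab' ((a + b) / 2) (fun x => f x y) (fun x => fx x y)
            (fun x hx => hfx x hx y (hu2 ▸ hy)) (slice_right hfxC (hu2 ▸ hy))
      _ = -((b - (a + b) / 2) * (∫ y in c..d, f b y)
            - (a - (a + b) / 2) * (∫ y in c..d, f a y)
            - ∫ y in c..d, ∫ x in a..b, f x y) := by
          rw [intervalIntegral.integral_sub (jA.sub jB) jint,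
            intervalIntegral.integral_sub jA jB,
            intervalIntegral.integral_const_mul, intervalIntegral.integral_const_mul]
      _ = -((b - (a + b) / 2) * (∫ y in c..d, f b y)
            - (a - (a + b) / 2) * (∫ y in c..d, f a y)
            - ∫ x in a..b, ∫ y in c..d, f x y) := by
          rw [swap_ii hcd' hab' (fun y x => f x y) hfswap]
  have kb1 : IntervalIntegrable
      (fun y => (a - (a + b) / 2) * ((y - (c + d) / 2) * fy a y)) volume c d := by
    apply ContinuousOn.intervalIntegrable
    rw [hu2]
    exact continuousOn_const.mul ((Continuous.continuousOn (by fun_prop)).mul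
      (slice_left hfyC hamem))
  have kb2 : IntervalIntegrable
      (fun y => (b - (a + b) / 2) * ((y - (c + d) / 2) * fy b y)) volume c d := by
    apply ContinuousOn.intervalIntegrable
    rw [hu2]
    exact continuousOn_const.mul ((Continuous.continuousOn (by fun_prop)).mul
      (slice_left hfyC hbmem))
  have hB : (∫ y in c..d, (fy a y * φ a y - fy b y * φ b y))
      = (a - (a + b) / 2) * ((d - (c + d) / 2) * f a d - (c - (c + d) / 2) * f a c
          - ∫ y in c..d, f a y)
        - (b - (a + b) / 2) * ((d - (c + d) / 2) * f b d - (c - (c + d) / 2) * f b c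
          - ∫ y in c..d, f b y) := by
    have pa := trap_parts hcd' ((c + d) / 2) (fun y => f a y) (fun y => fy a y)
        (fun y hy => hfy a hamem y hy) (slice_left hfyC hamem)
    have pb := trap_parts hcd' ((c + d) / 2) (fun y => f b y) (fun y => fy b y)
        (fun y hy => hfy b hbmem y hy) (slice_left hfyC hbmem)
    calc (∫ y in c..d, (fy a y * φ a y - fy b y * φ b y))
        = ∫ y in c..d, ((a - (a + b) / 2) * ((y - (c + d) / 2) * fy a y)
            - (b - (a + b) / 2) * ((y - (c + d) / 2) * fy b y)) := by
          apply intervalIntegral.integral_congr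
          intro y hy
          simp only [hφ]; ring
      _ = (a - (a + b) / 2) * (∫ y in c..d, (y - (c + d) / 2) * fy a y)
            - (b - (a + b) / 2) * (∫ y in c..d, (y - (c + d) / 2) * fy b y) := by
          rw [intervalIntegral.integral_sub kb1 kb2,
            intervalIntegral.integral_const_mul, intervalIntegral.integral_const_mul]
      _ = _ := by rw [pa, pb]
  linear_combination -key - hB
end

section
/- Let f be C² on [a,b]×[c,d] with error term E(f) defined by the two-dimensional trapezoidal rule ∫_a^b∫_c^d f dy dx = [f(a,c)+f(b,d)+f(a,d)+f(b,c)](b−a)(d−c)/4 + E(f). Then |E(f)| ≤ (‖f_x(·,c)‖_∞ + ‖f_x(·,d)‖_∞)·(b−a)²(d−c)/8 + (‖f_y(a,·)‖_∞ + ‖f_y(b,·)‖_∞)·(b−a)(d−c)²/8 + ‖f_{xy}‖_∞·(b−a)²(d−c)²/16. -/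
/-!
Integrating by parts against the kernel `(a + b) / 2 - x`, the trapezoidal rule on `[a, b]`
has error `∫ ((a + b) / 2 - x) g'(x) dx`, and since `∫ |(a + b) / 2 - x| dx = (b - a)² / 4` this
error is at most `‖g'‖∞ (b - a)² / 4`. In two dimensions, apply the rule in `x` to `f(·, y)` for
every `y` and integrate over `y`; apply it in `y` to the edge integrals of `f(a, ·)` and
`f(b, ·)`; and, after Fubini, apply it in `y` once more to `∫ ((a + b) / 2 - x) f_x(x, ·) dx`.
This writes `E(f)` as kernel integrals of `f_y(a, ·)`, `f_y(b, ·)`, `f_x(·, c)`, `f_x(·, d)` plus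
the product kernel against `f_xy`, and each term is bounded by its sup norm.
-/

open MeasureTheory Set Function intervalIntegral

noncomputable def trapezoidRemainder (a b : ℝ) (g : ℝ → ℝ) : ℝ :=
  ∫ x in a..b, ((a + b) / 2 - x) * g x

theorem integral_eq_trapezoid_add_remainder {a b : ℝ} (hab : a ≤ b) {g g' : ℝ → ℝ}
    (hg : ContinuousOn g (Icc a b)) (hg' : ContinuousOn g' (Icc a b))
    (hderiv : ∀ x ∈ Ioo a b, HasDerivAt g (g' x) x) :
    ∫ x in a..b, g x = (g a + g b) * ((b - a) / 2) + trapezoidRemainder a b g' := by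
  have hkernel : ∀ x, HasDerivAt (fun x => (a + b) / 2 - x) (-1) x := fun x => by
    simpa using (hasDerivAt_id x).const_sub ((a + b) / 2)
  have parts := integral_mul_deriv_eq_deriv_mul_of_hasDerivAt (u' := fun _ => -1)
    (by fun_prop) (uIcc_of_le hab ▸ hg)
    (fun x _ => hkernel x) (by simpa [hab] using hderiv)
    intervalIntegrable_const (hg'.intervalIntegrable_of_Icc hab)
  simp only [neg_one_mul, intervalIntegral.integral_neg] at parts
  rw [trapezoidRemainder, parts]
  ring

theorem integral_abs_midpoint_sub {a b : ℝ} (hab : a ≤ b) :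
    ∫ x in a..b, |(a + b) / 2 - x| = (b - a) ^ 2 / 4 := by
  have hcont : Continuous fun x : ℝ => |(a + b) / 2 - x| := by fun_prop
  rw [← integral_add_adjacent_intervals (b := (a + b) / 2) (hcont.intervalIntegrable _ _)
    (hcont.intervalIntegrable _ _)]
  have hleft : ∫ x in a..(a + b) / 2, |(a + b) / 2 - x|
      = ∫ x in a..(a + b) / 2, ((a + b) / 2 - x) :=
    integral_congr fun x hx => by
      rw [uIcc_of_le (by linarith)] at hx
      exact abs_of_nonneg (by linarith [hx.2])
  have hright : ∫ x in (a + b) / 2..b, |(a + b) / 2 - x|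
      = ∫ x in (a + b) / 2..b, (x - (a + b) / 2) :=
    integral_congr fun x hx => by
      rw [uIcc_of_le (by linarith)] at hx
      rw [abs_sub_comm]
      exact abs_of_nonneg (by linarith [hx.1])
  rw [hleft, hright, integral_sub intervalIntegrable_const intervalIntegrable_id,
    integral_sub intervalIntegrable_id intervalIntegrable_const]
  simp only [intervalIntegral.integral_const, integral_id, smul_eq_mul]
  ring

theorem abs_trapezoidRemainder_le {a b M : ℝ} (hab : a ≤ b) {h : ℝ → ℝ}
    (hM : ∀ x ∈ Icc a b, |h x| ≤ M) :
    |trapezoidRemainder a b h| ≤ M * ((b - a) ^ 2 / 4) :=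
  calc |trapezoidRemainder a b h| ≤ ∫ x in a..b, |(a + b) / 2 - x| * M := by
        rw [trapezoidRemainder, ← Real.norm_eq_abs]
        have hbound : Continuous fun x => |(a + b) / 2 - x| * M := by fun_prop
        refine norm_integral_le_of_norm_le hab (ae_of_all _ fun x hx => ?_)
          (hbound.intervalIntegrable _ _)
        rw [Real.norm_eq_abs, abs_mul]
        exact mul_le_mul_of_nonneg_left (hM x (Ioc_subset_Icc_self hx)) (abs_nonneg _)
    _ = M * ((b - a) ^ 2 / 4) := by
        rw [intervalIntegral.integral_mul_const, integral_abs_midpoint_sub hab, mul_comm]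

theorem trapezoidRemainder_congr {a b : ℝ} {u v : ℝ → ℝ} (h : EqOn u v (uIcc a b)) :
    trapezoidRemainder a b u = trapezoidRemainder a b v :=
  integral_congr fun x hx => by rw [h hx]

theorem trapezoidRemainder_add {a b : ℝ} {u v : ℝ → ℝ} (hu : IntervalIntegrable u volume a b)
    (hv : IntervalIntegrable v volume a b) :
    trapezoidRemainder a b (fun x => u x + v x)
      = trapezoidRemainder a b u + trapezoidRemainder a b v := by
  simp only [trapezoidRemainder, mul_add]
  exact integral_add (hu.continuousOn_mul (by fun_prop)) (hv.continuousOn_mul (by fun_prop))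

theorem trapezoidRemainder_mul_const (a b r : ℝ) (u : ℝ → ℝ) :
    trapezoidRemainder a b (fun x => u x * r) = trapezoidRemainder a b u * r := by
  simp only [trapezoidRemainder, ← mul_assoc, intervalIntegral.integral_mul_const]

theorem abs_le_sSup_image_abs {X : Type*} [TopologicalSpace X] {s : Set X} {g : X → ℝ}
    (hs : IsCompact s) (hg : ContinuousOn g s) {x : X} (hx : x ∈ s) :
    |g x| ≤ sSup ((fun x => |g x|) '' s) :=
  le_csSup (hs.bddAbove_image hg.abs) (mem_image_of_mem _ hx)

theorem intervalIntegral_integral_swap_of_continuousOn {E : Type*} [NormedAddCommGroup E]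
    [NormedSpace ℝ E] {a b c d : ℝ} (hab : a ≤ b) (hcd : c ≤ d)
    {g : ℝ → ℝ → E} (hg : ContinuousOn (uncurry g) (Icc a b ×ˢ Icc c d)) :
    ∫ x in a..b, ∫ y in c..d, g x y = ∫ y in c..d, ∫ x in a..b, g x y := by
  simp_rw [integral_of_le hab, integral_of_le hcd]
  refine integral_integral_swap ?_
  rw [Measure.prod_restrict, ← Measure.volume_eq_prod]
  exact (hg.integrableOn_compact (isCompact_Icc.prod isCompact_Icc)).mono_set
    (prod_mono Ioc_subset_Icc_self Ioc_subset_Icc_self)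

theorem ContinuousOn.intervalIntegral_of_prod {X E : Type*} [TopologicalSpace X]
    [NormedAddCommGroup E] [NormedSpace ℝ E] {s : Set X}
    {c d : ℝ} (hcd : c ≤ d) {g : X → ℝ → E} (hg : ContinuousOn (uncurry g) (s ×ˢ Icc c d)) :
    ContinuousOn (fun x => ∫ y in c..d, g x y) s := by
  -- Clamping `y` into `[c, d]` makes the integrand continuous without changing the integral.
  have hclamp : Continuous (uncurry fun (x : s) y => g x (projIcc c d hcd y)) :=
    hg.comp_continuous (f := fun p : s × ℝ => ((p.1 : X), (projIcc c d hcd p.2 : ℝ)))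
      (by fun_prop) fun p => ⟨p.1.2, (projIcc c d hcd p.2).2⟩
  rw [continuousOn_iff_continuous_domRestrict]
  refine (continuous_parametric_intervalIntegral_of_continuous' (μ := volume) hclamp c d).congr
    fun x => ?_
  refine integral_congr fun y hy => ?_
  simp [projIcc_of_mem hcd (uIcc_of_le hcd ▸ hy)]

theorem integral_trapezoidRemainder_eq {a b c d : ℝ} (hab : a ≤ b) (hcd : c ≤ d)
    {fx fxy : ℝ → ℝ → ℝ}
    (hfx : ContinuousOn (uncurry fx) (Icc a b ×ˢ Icc c d))
    (hfxy : ContinuousOn (uncurry fxy) (Icc a b ×ˢ Icc c d))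
    (hderiv : ∀ x ∈ Icc a b, ∀ y ∈ Ioo c d, HasDerivAt (fx x) (fxy x y) y) :
    ∫ y in c..d, trapezoidRemainder a b (fun x => fx x y)
      = (trapezoidRemainder a b (fun x => fx x c) + trapezoidRemainder a b (fun x => fx x d))
          * ((d - c) / 2)
        + trapezoidRemainder a b (fun x => trapezoidRemainder c d (fxy x)) := by
  have hkernel_x : ContinuousOn (uncurry fun x y => ((a + b) / 2 - x) * fx x y)
      (Icc a b ×ˢ Icc c d) :=
    (continuous_const.sub continuous_fst).continuousOn.mul hfx
  have hkernel_y : ContinuousOn (uncurry fun x y => ((c + d) / 2 - y) * fxy x y)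
      (Icc a b ×ˢ Icc c d) :=
    (continuous_const.sub continuous_snd).continuousOn.mul hfxy
  have hslice : ∀ x ∈ Icc a b, ∫ y in c..d, fx x y
      = (fx x c + fx x d) * ((d - c) / 2) + trapezoidRemainder c d (fxy x) := fun x hx =>
    integral_eq_trapezoid_add_remainder hcd (hfx.uncurry_left x hx) (hfxy.uncurry_left x hx)
      (hderiv x hx)
  have hc := (hfx.uncurry_right c (left_mem_Icc.2 hcd)).intervalIntegrable_of_Icc (μ := volume) hab
  have hd := (hfx.uncurry_right d (right_mem_Icc.2 hcd)).intervalIntegrable_of_Icc (μ := volume) hab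
  calc ∫ y in c..d, trapezoidRemainder a b (fun x => fx x y)
      = trapezoidRemainder a b (fun x => ∫ y in c..d, fx x y) := by
        simp only [trapezoidRemainder, ← intervalIntegral.integral_const_mul]
        exact (intervalIntegral_integral_swap_of_continuousOn hab hcd hkernel_x).symm
    _ = trapezoidRemainder a b
          (fun x => (fx x c + fx x d) * ((d - c) / 2) + trapezoidRemainder c d (fxy x)) :=
        trapezoidRemainder_congr fun x hx => hslice x (uIcc_of_le hab ▸ hx)
    _ = _ := by
        rw [trapezoidRemainder_add (v := fun x => trapezoidRemainder c d (fxy x))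
            ((hc.add hd).mul_const _)
            ((hkernel_y.intervalIntegral_of_prod hcd).intervalIntegrable_of_Icc hab),
          trapezoidRemainder_mul_const, trapezoidRemainder_add hc hd]

theorem integral_integral_eq_trapezoid_add {a b c d : ℝ} (hab : a ≤ b) (hcd : c ≤ d)
    {f fx fy fxy : ℝ → ℝ → ℝ}
    (hf : ContinuousOn (uncurry f) (Icc a b ×ˢ Icc c d))
    (hfx : ContinuousOn (uncurry fx) (Icc a b ×ˢ Icc c d))
    (hfy : ContinuousOn (uncurry fy) (Icc a b ×ˢ Icc c d))
    (hfxy : ContinuousOn (uncurry fxy) (Icc a b ×ˢ Icc c d))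
    (hderiv_x : ∀ x ∈ Ioo a b, ∀ y ∈ Icc c d, HasDerivAt (fun x => f x y) (fx x y) x)
    (hderiv_y : ∀ x ∈ Icc a b, ∀ y ∈ Ioo c d, HasDerivAt (f x) (fy x y) y)
    (hderiv_xy : ∀ x ∈ Icc a b, ∀ y ∈ Ioo c d, HasDerivAt (fx x) (fxy x y) y) :
    ∫ x in a..b, ∫ y in c..d, f x y
      = (f a c + f b d + f a d + f b c) * ((b - a) * (d - c) / 4)
        + (trapezoidRemainder c d (fy a) + trapezoidRemainder c d (fy b)) * ((b - a) / 2)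
        + (trapezoidRemainder a b (fun x => fx x c) + trapezoidRemainder a b (fun x => fx x d))
          * ((d - c) / 2)
        + trapezoidRemainder a b (fun x => trapezoidRemainder c d (fxy x)) := by
  have ha : a ∈ Icc a b := left_mem_Icc.2 hab
  have hb : b ∈ Icc a b := right_mem_Icc.2 hab
  have hinner : ∀ y ∈ Icc c d, ∫ x in a..b, f x y
      = (f a y + f b y) * ((b - a) / 2) + trapezoidRemainder a b (fun x => fx x y) :=
    fun y hy => integral_eq_trapezoid_add_remainder hab (hf.uncurry_right y hy)
      (hfx.uncurry_right y hy) fun x hx => hderiv_x x hx y hy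
  have hedge : ∀ x ∈ Icc a b, ∫ y in c..d, f x y
      = (f x c + f x d) * ((d - c) / 2) + trapezoidRemainder c d (fy x) := fun x hx =>
    integral_eq_trapezoid_add_remainder hcd (hf.uncurry_left x hx) (hfy.uncurry_left x hx)
      (hderiv_y x hx)
  have hremainder : IntervalIntegrable (fun y => trapezoidRemainder a b fun x => fx x y)
      volume c d := by
    refine ContinuousOn.intervalIntegrable_of_Icc hcd (ContinuousOn.intervalIntegral_of_prod hab
      (g := fun y x => ((a + b) / 2 - x) * fx x y) ?_)
    exact (continuous_const.sub continuous_snd).continuousOn.mul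
      (hfx.comp continuous_swap.continuousOn fun p hp => ⟨hp.2, hp.1⟩)
  have hfa := (hf.uncurry_left a ha).intervalIntegrable_of_Icc (μ := volume) hcd
  have hfb := (hf.uncurry_left b hb).intervalIntegrable_of_Icc (μ := volume) hcd
  calc ∫ x in a..b, ∫ y in c..d, f x y = ∫ y in c..d, ∫ x in a..b, f x y :=
        intervalIntegral_integral_swap_of_continuousOn hab hcd hf
    _ = ∫ y in c..d, ((f a y + f b y) * ((b - a) / 2) + trapezoidRemainder a b fun x => fx x y) :=
        integral_congr fun y hy => hinner y (uIcc_of_le hcd ▸ hy)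
    _ = ((∫ y in c..d, f a y) + ∫ y in c..d, f b y) * ((b - a) / 2)
          + ∫ y in c..d, trapezoidRemainder a b fun x => fx x y := by
        rw [integral_add ((hfa.add hfb).mul_const _) hremainder,
          intervalIntegral.integral_mul_const, integral_add hfa hfb]
    _ = _ := by
        rw [hedge a ha, hedge b hb, integral_trapezoidRemainder_eq hab hcd hfx hfxy hderiv_xy]
        ring

theorem abs_integral_integral_sub_trapezoid_le {a b c d : ℝ} (hab : a ≤ b) (hcd : c ≤ d)
    {f fx fy fxy : ℝ → ℝ → ℝ}
    (hf : ContinuousOn (uncurry f) (Icc a b ×ˢ Icc c d))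
    (hfx : ContinuousOn (uncurry fx) (Icc a b ×ˢ Icc c d))
    (hfy : ContinuousOn (uncurry fy) (Icc a b ×ˢ Icc c d))
    (hfxy : ContinuousOn (uncurry fxy) (Icc a b ×ˢ Icc c d))
    (hderiv_x : ∀ x ∈ Ioo a b, ∀ y ∈ Icc c d, HasDerivAt (fun x => f x y) (fx x y) x)
    (hderiv_y : ∀ x ∈ Icc a b, ∀ y ∈ Ioo c d, HasDerivAt (f x) (fy x y) y)
    (hderiv_xy : ∀ x ∈ Icc a b, ∀ y ∈ Ioo c d, HasDerivAt (fx x) (fxy x y) y)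
    {Mxc Mxd Mya Myb Mxy : ℝ}
    (hMxc : ∀ x ∈ Icc a b, |fx x c| ≤ Mxc) (hMxd : ∀ x ∈ Icc a b, |fx x d| ≤ Mxd)
    (hMya : ∀ y ∈ Icc c d, |fy a y| ≤ Mya) (hMyb : ∀ y ∈ Icc c d, |fy b y| ≤ Myb)
    (hMxy : ∀ x ∈ Icc a b, ∀ y ∈ Icc c d, |fxy x y| ≤ Mxy) :
    |(∫ x in a..b, ∫ y in c..d, f x y)
        - (f a c + f b d + f a d + f b c) * ((b - a) * (d - c) / 4)|
      ≤ (Mxc + Mxd) * ((b - a) ^ 2 * (d - c) / 8) + (Mya + Myb) * ((b - a) * (d - c) ^ 2 / 8)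
        + Mxy * ((b - a) ^ 2 * (d - c) ^ 2 / 16) := by
  have hba : 0 ≤ (b - a) / 2 := by linarith
  have hdc : 0 ≤ (d - c) / 2 := by linarith
  rw [integral_integral_eq_trapezoid_add hab hcd hf hfx hfy hfxy hderiv_x hderiv_y hderiv_xy,
    add_assoc, add_assoc, add_sub_cancel_left]
  calc _ ≤ (|trapezoidRemainder c d (fy a)| + |trapezoidRemainder c d (fy b)|) * ((b - a) / 2)
        + ((|trapezoidRemainder a b (fun x => fx x c)| + |trapezoidRemainder a b (fun x => fx x d)|)
          * ((d - c) / 2)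
        + |trapezoidRemainder a b (fun x => trapezoidRemainder c d (fxy x))|) := by
        refine (abs_add_le _ _).trans
          (add_le_add ?_ ((abs_add_le _ _).trans (add_le_add ?_ le_rfl)))
        · rw [abs_mul, abs_of_nonneg hba]
          exact mul_le_mul_of_nonneg_right (abs_add_le _ _) hba
        · rw [abs_mul, abs_of_nonneg hdc]
          exact mul_le_mul_of_nonneg_right (abs_add_le _ _) hdc
    _ ≤ (Mya * ((d - c) ^ 2 / 4) + Myb * ((d - c) ^ 2 / 4)) * ((b - a) / 2)
        + ((Mxc * ((b - a) ^ 2 / 4) + Mxd * ((b - a) ^ 2 / 4)) * ((d - c) / 2)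
        + Mxy * ((d - c) ^ 2 / 4) * ((b - a) ^ 2 / 4)) := by
        gcongr
        · exact abs_trapezoidRemainder_le hcd hMya
        · exact abs_trapezoidRemainder_le hcd hMyb
        · exact abs_trapezoidRemainder_le hab hMxc
        · exact abs_trapezoidRemainder_le hab hMxd
        · exact abs_trapezoidRemainder_le hab fun x hx =>
            abs_trapezoidRemainder_le hcd (hMxy x hx)
    _ = _ := by ring

/-- Trapezoidal rule sup-norm (p = ∞) error bound. -/
theorem stmt_2 (a b c d : ℝ) (hab : a < b) (hcd : c < d)
    (f fx fy fxy : ℝ → ℝ → ℝ)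
(hfC : ContinuousOn (fun p : ℝ × ℝ => f p.1 p.2) (Icc a b ×ˢ Icc c d))
    (hfx : ∀ x ∈ Icc a b, ∀ y ∈ Icc c d, HasDerivAt (fun x' => f x' y) (fx x y) x)
    (hfy : ∀ x ∈ Icc a b, ∀ y ∈ Icc c d, HasDerivAt (fun y' => f x y') (fy x y) y)
    (hfxy : ∀ x ∈ Icc a b, ∀ y ∈ Icc c d, HasDerivAt (fun y' => fx x y') (fxy x y) y)
    (hfxC : ContinuousOn (fun p : ℝ × ℝ => fx p.1 p.2) (Icc a b ×ˢ Icc c d))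
    (hfyC : ContinuousOn (fun p : ℝ × ℝ => fy p.1 p.2) (Icc a b ×ˢ Icc c d))
    (hfxyC : ContinuousOn (fun p : ℝ × ℝ => fxy p.1 p.2) (Icc a b ×ˢ Icc c d))
    (E : ℝ)
    (hE : (∫ x in a..b, ∫ y in c..d, f x y) = (f a c + f b d + f a d + f b c) * ((b - a) * (d - c) / 4) + E) :
    |E| ≤ (sSup ((fun x => |fx x c|) '' Icc a b) + sSup ((fun x => |fx x d|) '' Icc a b))
            * ((b - a) ^ 2 * (d - c) / 8)
        + (sSup ((fun y => |fy a y|) '' Icc c d) + sSup ((fun y => |fy b y|) '' Icc c d))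
            * ((b - a) * (d - c) ^ 2 / 8)
        + sSup ((fun p : ℝ × ℝ => |fxy p.1 p.2|) '' (Icc a b ×ˢ Icc c d))
            * ((b - a) ^ 2 * (d - c) ^ 2 / 16) := by
  rw [eq_sub_of_add_eq' hE.symm]
  exact abs_integral_integral_sub_trapezoid_le hab.le hcd.le hfC hfxC hfyC hfxyC
    (fun x hx y hy => hfx x (Ioo_subset_Icc_self hx) y hy)
    (fun x hx y hy => hfy x hx y (Ioo_subset_Icc_self hy))
    (fun x hx y hy => hfxy x hx y (Ioo_subset_Icc_self hy))
    (fun x hx => abs_le_sSup_image_abs isCompact_Icc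
      (hfxC.uncurry_right c (left_mem_Icc.2 hcd.le)) hx)
    (fun x hx => abs_le_sSup_image_abs isCompact_Icc
      (hfxC.uncurry_right d (right_mem_Icc.2 hcd.le)) hx)
    (fun y hy => abs_le_sSup_image_abs isCompact_Icc
      (hfyC.uncurry_left a (left_mem_Icc.2 hab.le)) hy)
    (fun y hy => abs_le_sSup_image_abs isCompact_Icc
      (hfyC.uncurry_left b (right_mem_Icc.2 hab.le)) hy)
    (fun x hx y hy => abs_le_sSup_image_abs (g := fun p : ℝ × ℝ => fxy p.1 p.2)
      (x := (x, y)) (isCompact_Icc.prod isCompact_Icc) hfxyC ⟨hx, hy⟩)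
end

section
/- Let f be C² on [a,b]×[c,d] with trapezoidal error E(f) as above, and suppose 1 < p < ∞ with q its conjugate exponent. Then |E(f)| ≤ (‖f_x(·,c)‖_p + ‖f_x(·,d)‖_p)·(d−c)(b−a)^{2−1/p}/4 · ((p−1)/(2p−1))^{1−1/p} + (‖f_y(a,·)‖_p + ‖f_y(b,·)‖_p)·(b−a)(d−c)^{2−1/p}/4 · ((p−1)/(2p−1))^{1−1/p} + ‖f_{xy}‖_p·(b−a)^{2−1/p}(d−c)^{2−1/p}/4 · ((p−1)/(2p−1))^{2(1−1/p)}. -/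
/-!
Integration by parts against the Peano kernel `x - (a + b) / 2` gives the one-dimensional
identity `∫ g = (g a + g b) (b - a) / 2 - ∫ (x - (a + b) / 2) g'`. Applied in `x` and then in
`y`, with Fubini to exchange the order of integration, it writes `E(f)` as
`∬ (x - m) (y - n) f_xy` (`m`, `n` the midpoints) minus the one-dimensional kernel integrals of
`f_x` along the horizontal edges and of `f_y` along the vertical edges. Hölder's inequality
bounds each term by the `L^p` norm of the derivative times the `L^q` norm of the kernel, which
on an interval of length `L` is `L ^ (2 - 1/p) / 2 * ((p - 1) / (2p - 1)) ^ (1 - 1/p)`; for the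
mixed term it is applied first in `y`, then in `x`.
-/

open MeasureTheory Set intervalIntegral

lemma ContinuousOn.memLp_restrict_Ioc {φ : ℝ → ℝ} {a b : ℝ} (hφ : ContinuousOn φ (Icc a b))
    (r : ENNReal) : MemLp φ r (volume.restrict (Ioc a b)) := by
  obtain ⟨C, hC⟩ := isCompact_Icc.exists_bound_of_continuousOn hφ
  refine MemLp.of_bound ((hφ.mono Ioc_subset_Icc_self).aestronglyMeasurable measurableSet_Ioc)
    C ?_
  rw [ae_restrict_iff' measurableSet_Ioc]
  exact ae_of_all _ fun x hx => hC x (Ioc_subset_Icc_self hx)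

lemma abs_intervalIntegral_mul_le_Lp_mul_Lq {u v : ℝ → ℝ} {a b p q : ℝ} (hab : a ≤ b)
    (hpq : p.HolderConjugate q) (hu : ContinuousOn u (Icc a b)) (hv : ContinuousOn v (Icc a b)) :
    |∫ x in a..b, u x * v x|
      ≤ (∫ x in a..b, |u x| ^ p) ^ (1 / p) * (∫ x in a..b, |v x| ^ q) ^ (1 / q) := by
  have : IsFiniteMeasure (volume.restrict (Ioc a b)) := by
    rw [isFiniteMeasure_restrict]; exact measure_Ioc_lt_top.ne
  simp only [integral_of_le hab]
  calc |∫ x in Ioc a b, u x * v x| ≤ ∫ x in Ioc a b, ‖u x‖ * ‖v x‖ := by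
        simpa only [Real.norm_eq_abs, abs_mul] using
          MeasureTheory.abs_integral_le_integral_abs (f := fun x => u x * v x)
    _ ≤ _ := integral_mul_norm_le_Lp_mul_Lq hpq (hu.memLp_restrict_Ioc _) (hv.memLp_restrict_Ioc _)

lemma integral_eq_trapezoid_sub_integral_mul_deriv {g g' : ℝ → ℝ} {a b : ℝ} (hab : a ≤ b)
    (hg : ContinuousOn g (Icc a b)) (hg' : ∀ x ∈ Ioo a b, HasDerivAt g (g' x) x)
    (hint : IntervalIntegrable g' volume a b) :
    ∫ x in a..b, g x
      = (g a + g b) * ((b - a) / 2) - ∫ x in a..b, (x - (a + b) / 2) * g' x := by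
  have hgi : IntervalIntegrable g volume a b := hg.intervalIntegrable_of_Icc hab
  have hki : IntervalIntegrable (fun x => (x - (a + b) / 2) * g' x) volume a b :=
    hint.continuousOn_mul (by fun_prop)
  have hparts := integral_eq_sub_of_hasDeriv_right_of_le hab
    (f := fun x => (x - (a + b) / 2) * g x) (f' := fun x => g x + (x - (a + b) / 2) * g' x)
    (by fun_prop)
    (fun x hx => by
      have h := ((hasDerivAt_id' x).sub_const ((a + b) / 2)).mul (hg' x hx)
      rw [one_mul] at h
      exact h.hasDerivWithinAt)
    (hgi.add hki)
  rw [integral_add hgi hki] at hparts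
  linear_combination hparts

lemma integral_abs_sub_midpoint_rpow {a b r : ℝ} (hab : a ≤ b) (hr : 0 < r) :
    ∫ x in a..b, |x - (a + b) / 2| ^ r = 2 * ((b - a) / 2) ^ (r + 1) / (r + 1) := by
  set m := (a + b) / 2 with hm
  have hcont : Continuous fun x : ℝ => |x - m| ^ r := by fun_prop (disch := positivity)
  rw [← integral_add_adjacent_intervals (b := m) (hcont.intervalIntegrable _ _)
    (hcont.intervalIntegrable _ _)]
  have hleft : ∫ x in a..m, |x - m| ^ r = ∫ x in a..m, (m - x) ^ r :=
    integral_congr fun x hx => by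
      rw [uIcc_of_le (by linarith)] at hx
      rw [abs_of_nonpos (by linarith [hx.2]), neg_sub]
  have hright : ∫ x in m..b, |x - m| ^ r = ∫ x in m..b, (x - m) ^ r :=
    integral_congr fun x hx => by
      rw [uIcc_of_le (by linarith)] at hx
      rw [abs_of_nonneg (by linarith [hx.1])]
  rw [hleft, hright, integral_comp_sub_left (fun x => x ^ r), integral_comp_sub_right
    (fun x => x ^ r), sub_self, integral_rpow (Or.inl (by linarith)),
    integral_rpow (Or.inl (by linarith)), Real.zero_rpow (by positivity),
    show m - a = (b - a) / 2 by rw [hm]; ring, show b - m = (b - a) / 2 by rw [hm]; ring]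
  ring

/-- The `L^q` norm of `x ↦ x - (a + b) / 2` on `[a, b]`, where `L = b - a` and `q` is the
conjugate exponent of `p`. -/
noncomputable def trapezoidKernelNorm (p L : ℝ) : ℝ :=
  L ^ (2 - 1 / p) / 2 * ((p - 1) / (2 * p - 1)) ^ (1 - 1 / p)

lemma trapezoidKernelNorm_eq_rpow_integral {a b p q : ℝ} (hab : a ≤ b)
    (hpq : p.HolderConjugate q) :
    trapezoidKernelNorm p (b - a) = (∫ x in a..b, |x - (a + b) / 2| ^ q) ^ (1 / q) := by
  have hq := hpq.symm.pos
  have hp1 : 1 - 1 / p = 1 / q := by linarith [hpq.one_div_add_one_div]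
  have hθ : (p - 1) / (2 * p - 1) = 1 / (q + 1) := by
    rw [hpq.conjugate_eq]; have := hpq.sub_one_pos; field_simp; ring
  have hexp : (q + 1) * (1 / q) = 1 + 1 / q := by field_simp
  obtain ⟨h, rfl⟩ : ∃ h, b = a + 2 * h := ⟨(b - a) / 2, by ring⟩
  have hh : 0 ≤ h := by linarith
  rw [integral_abs_sub_midpoint_rpow hab hq, add_sub_cancel_left,
    mul_div_cancel_left₀ _ two_ne_zero]
  symm
  rw [trapezoidKernelNorm, hp1, hθ,
    show 2 - 1 / p = 1 + 1 / q by linarith,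
    div_eq_mul_one_div _ (q + 1), Real.mul_rpow (by positivity) (by positivity),
    Real.mul_rpow (by positivity) (by positivity), Real.mul_rpow (by positivity) hh,
    ← Real.rpow_mul hh, hexp, Real.rpow_add two_pos, Real.rpow_one]
  ring

lemma trapezoidKernelNorm_nonneg {p L : ℝ} (hp : 1 ≤ p) (hL : 0 ≤ L) :
    0 ≤ trapezoidKernelNorm p L := by
  have : 0 ≤ (p - 1) / (2 * p - 1) := div_nonneg (by linarith) (by linarith)
  unfold trapezoidKernelNorm
  positivity

lemma abs_integral_sub_midpoint_mul_le {φ : ℝ → ℝ} {a b p q : ℝ} (hab : a ≤ b)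
    (hpq : p.HolderConjugate q) (hφ : ContinuousOn φ (Icc a b)) :
    |∫ x in a..b, (x - (a + b) / 2) * φ x|
      ≤ trapezoidKernelNorm p (b - a) * (∫ x in a..b, |φ x| ^ p) ^ (1 / p) := by
  rw [trapezoidKernelNorm_eq_rpow_integral hab hpq]
  exact abs_intervalIntegral_mul_le_Lp_mul_Lq hab hpq.symm (by fun_prop) hφ

lemma ContinuousOn.uncurry_flip {α β γ : Type*} [TopologicalSpace α] [TopologicalSpace β]
    [TopologicalSpace γ] {F : α → β → γ} {s : Set α} {t : Set β}
    (hF : ContinuousOn (Function.uncurry F) (s ×ˢ t)) :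
    ContinuousOn (Function.uncurry fun y x => F x y) (t ×ˢ s) :=
  hF.comp continuous_swap.continuousOn fun _ h => ⟨h.2, h.1⟩

lemma continuousOn_parametric_intervalIntegral_of_continuousOn {F : ℝ → ℝ → ℝ} {s : Set ℝ}
    {c d : ℝ} (hs : IsClosed s) (hcd : c ≤ d)
    (hF : ContinuousOn (Function.uncurry F) (s ×ˢ Icc c d)) :
    ContinuousOn (fun x => ∫ y in c..d, F x y) s := by
  -- replace `F` by a Tietze extension, which is jointly continuous on the whole plane
  obtain ⟨G, hG⟩ := ContinuousMap.exists_restrict_eq (hs.prod isClosed_Icc) ⟨_, hF.domRestrict⟩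
  refine (continuous_parametric_intervalIntegral_of_continuous' (f := fun x y => G (x, y))
    G.continuous c d).continuousOn.congr fun x hx => integral_congr fun y hy => ?_
  rw [uIcc_of_le hcd] at hy
  exact (congr_arg (· ⟨(x, y), hx, hy⟩) hG).symm

lemma intervalIntegral_intervalIntegral_swap_of_continuousOn {F : ℝ → ℝ → ℝ} {a b c d : ℝ}
    (hab : a ≤ b) (hcd : c ≤ d) (hF : ContinuousOn (Function.uncurry F) (Icc a b ×ˢ Icc c d)) :
    ∫ x in a..b, ∫ y in c..d, F x y = ∫ y in c..d, ∫ x in a..b, F x y := by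
  refine intervalIntegral_intervalIntegral_swap <|
    (hF.integrableOn_compact (isCompact_Icc.prod isCompact_Icc)).mono_set ?_
  rw [uIoc_of_le hab, uIoc_of_le hcd]
  exact prod_mono Ioc_subset_Icc_self Ioc_subset_Icc_self

lemma abs_integral_sub_midpoint_mul_integral_le {F : ℝ → ℝ → ℝ} {a b c d p q : ℝ}
    (hab : a ≤ b) (hcd : c ≤ d) (hpq : p.HolderConjugate q)
    (hF : ContinuousOn (Function.uncurry F) (Icc a b ×ˢ Icc c d)) :
    |∫ x in a..b, (x - (a + b) / 2) * ∫ y in c..d, (y - (c + d) / 2) * F x y|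
      ≤ trapezoidKernelNorm p (b - a) * trapezoidKernelNorm p (d - c)
        * (∫ x in a..b, ∫ y in c..d, |F x y| ^ p) ^ (1 / p) := by
  have hp := hpq.pos
  set K := trapezoidKernelNorm p (d - c)
  have hK : 0 ≤ K := trapezoidKernelNorm_nonneg hpq.lt.le (by linarith)
  set G := fun x => ∫ y in c..d, (y - (c + d) / 2) * F x y
  set J := fun x => ∫ y in c..d, |F x y| ^ p
  have hJ : ∀ x, 0 ≤ J x := fun x =>
    integral_nonneg hcd fun y _ => Real.rpow_nonneg (abs_nonneg _) p
  have hGJ : ∀ x ∈ Icc a b, |G x| ^ p ≤ K ^ p * J x := fun x hx => calc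
    |G x| ^ p ≤ (K * J x ^ (1 / p)) ^ p := Real.rpow_le_rpow (abs_nonneg _)
        (abs_integral_sub_midpoint_mul_le hcd hpq (hF.uncurry_left x hx)) hp.le
    _ = K ^ p * J x := by
        rw [Real.mul_rpow hK (by positivity [hJ x]), ← Real.rpow_mul (hJ x),
          one_div_mul_cancel hp.ne', Real.rpow_one]
  have hGC : ContinuousOn G (Icc a b) :=
    continuousOn_parametric_intervalIntegral_of_continuousOn isClosed_Icc hcd (by fun_prop)
  have hJC : ContinuousOn J (Icc a b) :=
    continuousOn_parametric_intervalIntegral_of_continuousOn isClosed_Icc hcd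
      (hF.abs.rpow_const fun _ _ => Or.inr hp.le)
  have hW : 0 ≤ ∫ x in a..b, J x := integral_nonneg hab fun x _ => hJ x
  have hGp : (∫ x in a..b, |G x| ^ p) ^ (1 / p) ≤ K * (∫ x in a..b, J x) ^ (1 / p) := by
    rw [one_div, Real.rpow_inv_le_iff_of_pos (integral_nonneg hab fun x _ => by positivity)
      (by positivity) hp, Real.mul_rpow hK (by positivity), ← Real.rpow_mul hW,
      inv_mul_cancel₀ hp.ne', Real.rpow_one, ← intervalIntegral.integral_const_mul]
    exact integral_mono_on hab
      ((hGC.abs.rpow_const fun _ _ => Or.inr hp.le).intervalIntegrable_of_Icc hab)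
      ((continuousOn_const.mul hJC).intervalIntegrable_of_Icc hab) hGJ
  calc _ ≤ trapezoidKernelNorm p (b - a) * (∫ x in a..b, |G x| ^ p) ^ (1 / p) :=
        abs_integral_sub_midpoint_mul_le hab hpq hGC
    _ ≤ _ := by
        rw [mul_assoc]
        exact mul_le_mul_of_nonneg_left hGp (trapezoidKernelNorm_nonneg hpq.lt.le (by linarith))

lemma integral_rect_sub_trapezoid_eq {f fx fy fxy : ℝ → ℝ → ℝ} {a b c d : ℝ}
    (hab : a ≤ b) (hcd : c ≤ d)
    (hfC : ContinuousOn (Function.uncurry f) (Icc a b ×ˢ Icc c d))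
    (hfx : ∀ x ∈ Ioo a b, ∀ y ∈ Icc c d, HasDerivAt (fun x' => f x' y) (fx x y) x)
    (hfy : ∀ x ∈ Icc a b, ∀ y ∈ Ioo c d, HasDerivAt (fun y' => f x y') (fy x y) y)
    (hfxy : ∀ x ∈ Icc a b, ∀ y ∈ Ioo c d, HasDerivAt (fun y' => fx x y') (fxy x y) y)
    (hfxC : ContinuousOn (Function.uncurry fx) (Icc a b ×ˢ Icc c d))
    (hfyC : ContinuousOn (Function.uncurry fy) (Icc a b ×ˢ Icc c d))
    (hfxyC : ContinuousOn (Function.uncurry fxy) (Icc a b ×ˢ Icc c d)) :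
    (∫ x in a..b, ∫ y in c..d, f x y) - (f a c + f b d + f a d + f b c) * ((b - a) * (d - c) / 4)
      = (∫ x in a..b, (x - (a + b) / 2) * ∫ y in c..d, (y - (c + d) / 2) * fxy x y)
        - (d - c) / 2 * ((∫ x in a..b, (x - (a + b) / 2) * fx x c)
          + ∫ x in a..b, (x - (a + b) / 2) * fx x d)
        - (b - a) / 2 * ((∫ y in c..d, (y - (c + d) / 2) * fy a y)
          + ∫ y in c..d, (y - (c + d) / 2) * fy b y) := by
  set m := (a + b) / 2
  set n := (c + d) / 2
  set H := fun y => ∫ x in a..b, (x - m) * fx x y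
  set G := fun x => ∫ y in c..d, (y - n) * fxy x y
  have ha : a ∈ Icc a b := left_mem_Icc.2 hab
  have hb : b ∈ Icc a b := right_mem_Icc.2 hab
  have hc : c ∈ Icc c d := left_mem_Icc.2 hcd
  have hd : d ∈ Icc c d := right_mem_Icc.2 hcd
  have hrow : ∀ y ∈ Icc c d, ∫ x in a..b, f x y = (f a y + f b y) * ((b - a) / 2) - H y :=
    fun y hy => integral_eq_trapezoid_sub_integral_mul_deriv hab (hfC.uncurry_right y hy)
      (fun x hx => hfx x hx y hy) ((hfxC.uncurry_right y hy).intervalIntegrable_of_Icc hab)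
  have hcol : ∀ x ∈ Icc a b, ∫ y in c..d, f x y
      = (f x c + f x d) * ((d - c) / 2) - ∫ y in c..d, (y - n) * fy x y :=
    fun x hx => integral_eq_trapezoid_sub_integral_mul_deriv hcd (hfC.uncurry_left x hx)
      (hfy x hx) ((hfyC.uncurry_left x hx).intervalIntegrable_of_Icc hcd)
  have hcolx : ∀ x ∈ Icc a b, ∫ y in c..d, fx x y = (fx x c + fx x d) * ((d - c) / 2) - G x :=
    fun x hx => integral_eq_trapezoid_sub_integral_mul_deriv hcd (hfxC.uncurry_left x hx)
      (hfxy x hx) ((hfxyC.uncurry_left x hx).intervalIntegrable_of_Icc hcd)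
  have hHC : ContinuousOn H (Icc c d) :=
    continuousOn_parametric_intervalIntegral_of_continuousOn isClosed_Icc hab
      (ContinuousOn.uncurry_flip (F := fun x y => (x - m) * fx x y) (by fun_prop))
  have hGC : ContinuousOn G (Icc a b) :=
    continuousOn_parametric_intervalIntegral_of_continuousOn isClosed_Icc hcd (by fun_prop)
  have hint : ∫ y in c..d, H y = (d - c) / 2 * (H c + H d) - ∫ x in a..b, (x - m) * G x := calc
    ∫ y in c..d, H y = ∫ x in a..b, ∫ y in c..d, (x - m) * fx x y :=
        (intervalIntegral_intervalIntegral_swap_of_continuousOn hab hcd (by fun_prop)).symm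
    _ = ∫ x in a..b, ((d - c) / 2 * ((x - m) * fx x c) + (d - c) / 2 * ((x - m) * fx x d)
          - (x - m) * G x) := integral_congr fun x hx => by
        rw [uIcc_of_le hab] at hx
        simp only [intervalIntegral.integral_const_mul, hcolx x hx]
        ring
    _ = _ := by
        have hxc := hfxC.uncurry_right c hc
        have hxd := hfxC.uncurry_right d hd
        rw [intervalIntegral.integral_sub, intervalIntegral.integral_add,
          intervalIntegral.integral_const_mul, intervalIntegral.integral_const_mul, mul_add]
        all_goals refine ContinuousOn.intervalIntegrable_of_Icc hab ?_
        all_goals fun_prop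
  have hsplit : ∫ y in c..d, ((f a y + f b y) * ((b - a) / 2) - H y)
      = ((∫ y in c..d, f a y) + ∫ y in c..d, f b y) * ((b - a) / 2) - ∫ y in c..d, H y := by
    have hya := hfC.uncurry_left a ha
    have hyb := hfC.uncurry_left b hb
    rw [intervalIntegral.integral_sub, intervalIntegral.integral_mul_const,
      intervalIntegral.integral_add]
    all_goals refine ContinuousOn.intervalIntegrable_of_Icc hcd ?_
    all_goals fun_prop
  rw [intervalIntegral_intervalIntegral_swap_of_continuousOn hab hcd hfC,
    integral_congr fun y hy => hrow y (by rwa [uIcc_of_le hcd] at hy), hsplit, hint,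
    hcol a ha, hcol b hb]
  ring

lemma abs_integral_rect_sub_trapezoid_le {f fx fy fxy : ℝ → ℝ → ℝ} {a b c d p q : ℝ}
    (hab : a ≤ b) (hcd : c ≤ d) (hpq : p.HolderConjugate q)
    (hfC : ContinuousOn (Function.uncurry f) (Icc a b ×ˢ Icc c d))
    (hfx : ∀ x ∈ Ioo a b, ∀ y ∈ Icc c d, HasDerivAt (fun x' => f x' y) (fx x y) x)
    (hfy : ∀ x ∈ Icc a b, ∀ y ∈ Ioo c d, HasDerivAt (fun y' => f x y') (fy x y) y)
    (hfxy : ∀ x ∈ Icc a b, ∀ y ∈ Ioo c d, HasDerivAt (fun y' => fx x y') (fxy x y) y)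
    (hfxC : ContinuousOn (Function.uncurry fx) (Icc a b ×ˢ Icc c d))
    (hfyC : ContinuousOn (Function.uncurry fy) (Icc a b ×ˢ Icc c d))
    (hfxyC : ContinuousOn (Function.uncurry fxy) (Icc a b ×ˢ Icc c d)) :
    |(∫ x in a..b, ∫ y in c..d, f x y)
        - (f a c + f b d + f a d + f b c) * ((b - a) * (d - c) / 4)|
      ≤ trapezoidKernelNorm p (b - a) * trapezoidKernelNorm p (d - c)
          * (∫ x in a..b, ∫ y in c..d, |fxy x y| ^ p) ^ (1 / p)
        + (d - c) / 2 * (trapezoidKernelNorm p (b - a) * (∫ x in a..b, |fx x c| ^ p) ^ (1 / p)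
          + trapezoidKernelNorm p (b - a) * (∫ x in a..b, |fx x d| ^ p) ^ (1 / p))
        + (b - a) / 2 * (trapezoidKernelNorm p (d - c) * (∫ y in c..d, |fy a y| ^ p) ^ (1 / p)
          + trapezoidKernelNorm p (d - c) * (∫ y in c..d, |fy b y| ^ p) ^ (1 / p)) := by
  have hxc := abs_integral_sub_midpoint_mul_le hab hpq
    (hfxC.uncurry_right c (left_mem_Icc.2 hcd))
  have hxd := abs_integral_sub_midpoint_mul_le hab hpq
    (hfxC.uncurry_right d (right_mem_Icc.2 hcd))
  have hya := abs_integral_sub_midpoint_mul_le hcd hpq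
    (hfyC.uncurry_left a (left_mem_Icc.2 hab))
  have hyb := abs_integral_sub_midpoint_mul_le hcd hpq
    (hfyC.uncurry_left b (right_mem_Icc.2 hab))
  rw [integral_rect_sub_trapezoid_eq hab hcd hfC hfx hfy hfxy hfxC hfyC hfxyC]
  refine ((abs_sub _ _).trans (add_le_add (abs_sub _ _) le_rfl)).trans ?_
  rw [abs_mul, abs_mul, abs_of_nonneg (by linarith : 0 ≤ (d - c) / 2),
    abs_of_nonneg (by linarith : 0 ≤ (b - a) / 2)]
  gcongr
  · exact abs_integral_sub_midpoint_mul_integral_le hab hcd hpq hfxyC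
  · exact (abs_add_le _ _).trans (add_le_add hxc hxd)
  · exact (abs_add_le _ _).trans (add_le_add hya hyb)

/-- Trapezoidal rule L^p error bound, 1 < p < ∞. -/
theorem stmt_3 (a b c d : ℝ) (hab : a < b) (hcd : c < d)
    (p q : ℝ) (hp : 1 < p) (hpq : 1 / p + 1 / q = 1)
    (f fx fy fxy : ℝ → ℝ → ℝ)
(hfC : ContinuousOn (fun p : ℝ × ℝ => f p.1 p.2) (Icc a b ×ˢ Icc c d))
    (hfx : ∀ x ∈ Icc a b, ∀ y ∈ Icc c d, HasDerivAt (fun x' => f x' y) (fx x y) x)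
    (hfy : ∀ x ∈ Icc a b, ∀ y ∈ Icc c d, HasDerivAt (fun y' => f x y') (fy x y) y)
    (hfxy : ∀ x ∈ Icc a b, ∀ y ∈ Icc c d, HasDerivAt (fun y' => fx x y') (fxy x y) y)
    (hfxC : ContinuousOn (fun p : ℝ × ℝ => fx p.1 p.2) (Icc a b ×ˢ Icc c d))
    (hfyC : ContinuousOn (fun p : ℝ × ℝ => fy p.1 p.2) (Icc a b ×ˢ Icc c d))
    (hfxyC : ContinuousOn (fun p : ℝ × ℝ => fxy p.1 p.2) (Icc a b ×ˢ Icc c d))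
    (E : ℝ)
    (hE : (∫ x in a..b, ∫ y in c..d, f x y) = (f a c + f b d + f a d + f b c) * ((b - a) * (d - c) / 4) + E) :
    |E| ≤ ((∫ x in a..b, |fx x c| ^ p) ^ (1 / p) + (∫ x in a..b, |fx x d| ^ p) ^ (1 / p))
            * ((d - c) * (b - a) ^ (2 - 1 / p) / 4) * ((p - 1) / (2 * p - 1)) ^ (1 - 1 / p)
        + ((∫ y in c..d, |fy a y| ^ p) ^ (1 / p) + (∫ y in c..d, |fy b y| ^ p) ^ (1 / p))
            * ((b - a) * (d - c) ^ (2 - 1 / p) / 4) * ((p - 1) / (2 * p - 1)) ^ (1 - 1 / p)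
        + (∫ x in a..b, ∫ y in c..d, |fxy x y| ^ p) ^ (1 / p)
            * ((b - a) ^ (2 - 1 / p) * (d - c) ^ (2 - 1 / p) / 4)
            * ((p - 1) / (2 * p - 1)) ^ (2 * (1 - 1 / p)) := by
  have hpq' : p.HolderConjugate q :=
    Real.holderConjugate_iff.mpr ⟨hp, by simpa only [one_div] using hpq⟩
  have hErr := abs_integral_rect_sub_trapezoid_le hab.le hcd.le hpq' hfC
    (fun x hx => hfx x (Ioo_subset_Icc_self hx))
    (fun x hx y hy => hfy x hx y (Ioo_subset_Icc_self hy))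
    (fun x hx y hy => hfxy x hx y (Ioo_subset_Icc_self hy)) hfxC hfyC hfxyC
  rw [hE, add_sub_cancel_left] at hErr
  refine hErr.trans_eq ?_
  rw [two_mul (1 - 1 / p), Real.rpow_add (div_pos (by linarith) (by linarith))]
  simp only [trapezoidKernelNorm]
  ring
end

section
/- Let f be C² on [a,b]×[c,d] with trapezoidal error E(f) as above. If the gradient of f satisfies |∇f| ≤ M everywhere on [a,b]×[c,d] and |f_{xy}| ≤ N everywhere, then |E(f)| ≤ M(b−a)²(d−c)/4 + M(b−a)(d−c)²/4 + N(b−a)²(d−c)²/16. -/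
open MeasureTheory Set

lemma trap1 {c d M : ℝ} (hcd : c ≤ d) (g g' : ℝ → ℝ)
    (hg : ∀ y ∈ Icc c d, HasDerivAt g (g' y) y)
    (hM : ∀ y ∈ Icc c d, |g' y| ≤ M) :
    |(∫ y in c..d, g y) - (g c + g d) * ((d - c) / 2)| ≤ M * (d - c) ^ 2 / 4 := by
  obtain ⟨m, hm⟩ : ∃ m : ℝ, m = (c + d) / 2 := ⟨_, rfl⟩
  have hcm : c ≤ m := by rw [hm]; linarith
  have hmd : m ≤ d := by rw [hm]; linarith
  have hgc : ContinuousOn g (Icc c d) := fun y hy =>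
    (hg y hy).continuousAt.continuousWithinAt
  have lip : ∀ y ∈ Icc c d, ∀ z ∈ Icc c d, |g y - g z| ≤ M * |y - z| := by
    intro y hy z hz
    have := (convex_Icc c d).norm_image_sub_le_of_norm_hasDerivWithin_le
      (fun x hx => (hg x hx).hasDerivWithinAt)
      (fun x hx => by simpa [Real.norm_eq_abs] using hM x hx) hz hy
    simpa [Real.norm_eq_abs] using this
  have int1 : IntervalIntegrable g volume c m :=
    (hgc.mono (Icc_subset_Icc le_rfl hmd)).intervalIntegrable_of_Icc hcm
  have int2 : IntervalIntegrable g volume m d :=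
    (hgc.mono (Icc_subset_Icc hcm le_rfl)).intervalIntegrable_of_Icc hmd
  have split : (∫ y in c..d, g y) = (∫ y in c..m, g y) + ∫ y in m..d, g y :=
    (intervalIntegral.integral_add_adjacent_intervals int1 int2).symm
  have key : ∀ (u v : ℝ) (p : ℝ), c ≤ u → u ≤ v → v ≤ d → p ∈ Icc c d →
      |∫ y in u..v, (g y - g p)| ≤ ∫ y in u..v, M * |y - p| := by
    intro u v p hu huv hv hp
    have hsub : Icc u v ⊆ Icc c d := Icc_subset_Icc hu hv
    have h1 : IntervalIntegrable (fun y => |g y - g p|) volume u v :=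
      (((hgc.mono hsub).sub continuousOn_const).abs).intervalIntegrable_of_Icc huv
    have h2 : IntervalIntegrable (fun y => M * |y - p|) volume u v :=
      (Continuous.intervalIntegrable (by continuity) u v)
    calc |∫ y in u..v, (g y - g p)| ≤ ∫ y in u..v, |g y - g p| := by
            simpa [Real.norm_eq_abs] using
              intervalIntegral.norm_integral_le_integral_norm (f := fun y => g y - g p) huv
      _ ≤ ∫ y in u..v, M * |y - p| :=
            intervalIntegral.integral_mono_on huv h1 h2 (fun y hy => lip y (hsub hy) p hp)
  have comp1 : (∫ y in c..m, M * |y - c|) = M * (m - c) ^ 2 / 2 := by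
    have h : (∫ y in c..m, M * |y - c|) = ∫ y in c..m, M * (y - c) := by
      apply intervalIntegral.integral_congr
      intro y hy
      rw [uIcc_of_le hcm, mem_Icc] at hy
      simp only
      rw [abs_of_nonneg (by linarith [hy.1])]
    rw [h, intervalIntegral.integral_const_mul,
      intervalIntegral.integral_sub (continuous_id'.intervalIntegrable _ _)
        (continuous_const.intervalIntegrable _ _),
      integral_id, intervalIntegral.integral_const, smul_eq_mul]
    ring
  have comp2 : (∫ y in m..d, M * |y - d|) = M * (d - m) ^ 2 / 2 := by
    have h : (∫ y in m..d, M * |y - d|) = ∫ y in m..d, M * (d - y) := by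
      apply intervalIntegral.integral_congr
      intro y hy
      rw [uIcc_of_le hmd, mem_Icc] at hy
      simp only
      rw [abs_of_nonpos (by linarith [hy.2]), neg_sub]
    rw [h, intervalIntegral.integral_const_mul,
      intervalIntegral.integral_sub (continuous_const.intervalIntegrable _ _)
        (continuous_id'.intervalIntegrable _ _),
      integral_id, intervalIntegral.integral_const, smul_eq_mul]
    ring
  have e1 : (∫ y in c..m, (g y - g c)) = (∫ y in c..m, g y) - g c * (m - c) := by
    rw [intervalIntegral.integral_sub int1 (continuous_const.intervalIntegrable _ _),
      intervalIntegral.integral_const, smul_eq_mul]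
    ring
  have e2 : (∫ y in m..d, (g y - g d)) = (∫ y in m..d, g y) - g d * (d - m) := by
    rw [intervalIntegral.integral_sub int2 (continuous_const.intervalIntegrable _ _),
      intervalIntegral.integral_const, smul_eq_mul]
    ring
  have b1 := (key c m c le_rfl hcm hmd ⟨le_rfl, hcd⟩).trans (le_of_eq comp1)
  have b2 := (key m d d hcm hmd le_rfl ⟨hcd, le_rfl⟩).trans (le_of_eq comp2)
  have hmc : m - c = (d - c) / 2 := by rw [hm]; ring
  have hdm : d - m = (d - c) / 2 := by rw [hm]; ring
  have hid : (∫ y in c..d, g y) - (g c + g d) * ((d - c) / 2)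
      = (∫ y in c..m, (g y - g c)) + ∫ y in m..d, (g y - g d) := by
    rw [e1, e2, split, hmc, hdm]; ring
  rw [hid]
  calc |(∫ y in c..m, (g y - g c)) + ∫ y in m..d, (g y - g d)|
      ≤ |∫ y in c..m, (g y - g c)| + |∫ y in m..d, (g y - g d)| := abs_add_le _ _
    _ ≤ M * (m - c) ^ 2 / 2 + M * (d - m) ^ 2 / 2 := add_le_add b1 b2
    _ = M * (d - c) ^ 2 / 4 := by rw [hmc, hdm]; ring

/-- Trapezoidal rule error bound under uniform gradient bounds. -/
theorem stmt_4 (a b c d : ℝ) (hab : a < b) (hcd : c < d)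
    (f fx fy fxy : ℝ → ℝ → ℝ)
(hfC : ContinuousOn (fun p : ℝ × ℝ => f p.1 p.2) (Icc a b ×ˢ Icc c d))
    (hfx : ∀ x ∈ Icc a b, ∀ y ∈ Icc c d, HasDerivAt (fun x' => f x' y) (fx x y) x)
    (hfy : ∀ x ∈ Icc a b, ∀ y ∈ Icc c d, HasDerivAt (fun y' => f x y') (fy x y) y)
    (hfxy : ∀ x ∈ Icc a b, ∀ y ∈ Icc c d, HasDerivAt (fun y' => fx x y') (fxy x y) y)
    (hfxC : ContinuousOn (fun p : ℝ × ℝ => fx p.1 p.2) (Icc a b ×ˢ Icc c d))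
    (hfyC : ContinuousOn (fun p : ℝ × ℝ => fy p.1 p.2) (Icc a b ×ˢ Icc c d))
    (hfxyC : ContinuousOn (fun p : ℝ × ℝ => fxy p.1 p.2) (Icc a b ×ˢ Icc c d))
    (M N : ℝ)
    (hM : ∀ x ∈ Icc a b, ∀ y ∈ Icc c d, Real.sqrt ((fx x y) ^ 2 + (fy x y) ^ 2) ≤ M)
    (hN : ∀ x ∈ Icc a b, ∀ y ∈ Icc c d, |fxy x y| ≤ N)
    (E : ℝ)
    (hE : (∫ x in a..b, ∫ y in c..d, f x y) = (f a c + f b d + f a d + f b c) * ((b - a) * (d - c) / 4) + E) :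
    |E| ≤ M * (b - a) ^ 2 * (d - c) / 4 + M * (b - a) * (d - c) ^ 2 / 4
        + N * (b - a) ^ 2 * (d - c) ^ 2 / 16 := by
  have ha : a ∈ Icc a b := ⟨le_rfl, hab.le⟩
  have hb : b ∈ Icc a b := ⟨hab.le, le_rfl⟩
  have hc : c ∈ Icc c d := ⟨le_rfl, hcd.le⟩
  have hd : d ∈ Icc c d := ⟨hcd.le, le_rfl⟩
  -- component bounds
  have hMx : ∀ x ∈ Icc a b, ∀ y ∈ Icc c d, |fx x y| ≤ M := by
    intro x hx y hy
    have h1 : |fx x y| = Real.sqrt ((fx x y) ^ 2) := (Real.sqrt_sq_eq_abs _).symm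
    rw [h1]
    exact (Real.sqrt_le_sqrt (by nlinarith [sq_nonneg (fy x y)])).trans (hM x hx y hy)
  have hMy : ∀ x ∈ Icc a b, ∀ y ∈ Icc c d, |fy x y| ≤ M := by
    intro x hx y hy
    have h1 : |fy x y| = Real.sqrt ((fy x y) ^ 2) := (Real.sqrt_sq_eq_abs _).symm
    rw [h1]
    exact (Real.sqrt_le_sqrt (by nlinarith [sq_nonneg (fx x y)])).trans (hM x hx y hy)
  have hN0 : 0 ≤ N := (abs_nonneg _).trans (hN a ha c hc)
  -- continuity of slices
  have slice : ∀ x ∈ Icc a b, ContinuousOn (fun y => f x y) (Icc c d) := by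
    intro x hx
    exact hfC.comp (Continuous.continuousOn (continuous_const.prodMk continuous_id))
      (fun y hy => ⟨hx, hy⟩)
  have sliceInt : ∀ x ∈ Icc a b, IntervalIntegrable (fun y => f x y) volume c d :=
    fun x hx => (slice x hx).intervalIntegrable_of_Icc hcd.le
  -- S
  set S : ℝ → ℝ := fun x => ∫ y in c..d, f x y with hS
  -- Lipschitz in x
  have lipx : ∀ y ∈ Icc c d, ∀ x ∈ Icc a b, ∀ x' ∈ Icc a b,
      |f x y - f x' y| ≤ M * |x - x'| := by
    intro y hy x hx x' hx'
    have := (convex_Icc a b).norm_image_sub_le_of_norm_hasDerivWithin_le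
      (fun t ht => (hfx t ht y hy).hasDerivWithinAt)
      (fun t ht => by simpa [Real.norm_eq_abs] using hMx t ht y hy) hx' hx
    simpa [Real.norm_eq_abs] using this
  have SC : ContinuousOn S (Icc a b) := by
    have key : ∀ x ∈ Icc a b, ∀ x' ∈ Icc a b, dist (S x) (S x') ≤ M * (d - c) * dist x x' := by
      intro x hx x' hx'
      have hsub : (∫ y in c..d, f x y) - (∫ y in c..d, f x' y)
          = ∫ y in c..d, (f x y - f x' y) :=
        (intervalIntegral.integral_sub (sliceInt x hx) (sliceInt x' hx')).symm
      rw [Real.dist_eq, Real.dist_eq, hS]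
      simp only
      rw [hsub]
      have hbd : ∀ y ∈ Set.uIoc c d, ‖f x y - f x' y‖ ≤ M * |x - x'| := by
        intro y hy
        rw [Set.uIoc_of_le hcd.le] at hy
        have := lipx y ⟨hy.1.le, hy.2⟩ x hx x' hx'
        simpa [Real.norm_eq_abs] using this
      have h1 : |∫ y in c..d, (f x y - f x' y)| ≤ M * |x - x'| * |d - c| := by
        simpa [Real.norm_eq_abs] using
          intervalIntegral.norm_integral_le_of_norm_le_const hbd
      have h2 : M * |x - x'| * |d - c| = M * (d - c) * |x - x'| := by
        rw [abs_of_nonneg (by linarith : (0:ℝ) ≤ d - c)]; ring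
      rw [h2] at h1
      exact h1
    have hK : 0 ≤ M * (d - c) := by
      have : (0:ℝ) ≤ M := (abs_nonneg _).trans (hMx a ha c hc)
      nlinarith
    have lips : LipschitzOnWith (Real.toNNReal (M * (d - c))) S (Icc a b) := by
      rw [lipschitzOnWith_iff_dist_le_mul]
      intro x hx x' hx'
      simpa [Real.coe_toNNReal _ hK] using key x hx x' hx'
    exact lips.continuousOn
  have SInt : IntervalIntegrable S volume a b := SC.intervalIntegrable_of_Icc hab.le
  -- cont of boundary slices
  have hfcC : ContinuousOn (fun x => f x c) (Icc a b) :=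
    hfC.comp (Continuous.continuousOn (continuous_id.prodMk continuous_const))
      (fun x hx => ⟨hx, hc⟩)
  have hfdC : ContinuousOn (fun x => f x d) (Icc a b) :=
    hfC.comp (Continuous.continuousOn (continuous_id.prodMk continuous_const))
      (fun x hx => ⟨hx, hd⟩)
  have hInt : IntervalIntegrable (fun x => f x c + f x d) volume a b :=
    (hfcC.add hfdC).intervalIntegrable_of_Icc hab.le
  -- inner trapezoid bound
  have inner : ∀ x ∈ Icc a b, |S x - (f x c + f x d) * ((d - c) / 2)| ≤ M * (d - c) ^ 2 / 4 := by
    intro x hx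
    exact trap1 hcd.le (fun y => f x y) (fy x) (hfy x hx) (fun y hy => hMy x hx y hy)
  -- I1
  have hInt2 : IntervalIntegrable (fun x => (f x c + f x d) * ((d - c) / 2)) volume a b :=
    ((hfcC.add hfdC).mul continuousOn_const).intervalIntegrable_of_Icc hab.le
  have I1eq : (∫ x in a..b, (S x - (f x c + f x d) * ((d - c) / 2)))
      = (∫ x in a..b, S x) - (∫ x in a..b, (f x c + f x d)) * ((d - c) / 2) := by
    rw [intervalIntegral.integral_sub SInt hInt2, intervalIntegral.integral_mul_const]
  have I1bd : |∫ x in a..b, (S x - (f x c + f x d) * ((d - c) / 2))|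
      ≤ M * (d - c) ^ 2 / 4 * (b - a) := by
    have hbd : ∀ x ∈ Set.uIoc a b, ‖S x - (f x c + f x d) * ((d - c) / 2)‖
        ≤ M * (d - c) ^ 2 / 4 := by
      intro x hx
      rw [Set.uIoc_of_le hab.le] at hx
      simpa [Real.norm_eq_abs] using inner x ⟨hx.1.le, hx.2⟩
    calc |∫ x in a..b, (S x - (f x c + f x d) * ((d - c) / 2))|
        ≤ M * (d - c) ^ 2 / 4 * |b - a| := by
          simpa [Real.norm_eq_abs] using
            intervalIntegral.norm_integral_le_of_norm_le_const hbd
      _ = M * (d - c) ^ 2 / 4 * (b - a) := by rw [abs_of_nonneg (by linarith)]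
  -- outer trapezoid bound
  have outer : |(∫ x in a..b, (f x c + f x d))
      - ((f a c + f a d) + (f b c + f b d)) * ((b - a) / 2)| ≤ 2 * M * (b - a) ^ 2 / 4 := by
    have := trap1 hab.le (fun x => f x c + f x d) (fun x => fx x c + fx x d)
      (fun x hx => (hfx x hx c hc).add (hfx x hx d hd))
      (fun x hx => by
        have h1 := hMx x hx c hc
        have h2 := hMx x hx d hd
        calc |fx x c + fx x d| ≤ |fx x c| + |fx x d| := abs_add_le _ _
          _ ≤ 2 * M := by linarith)
    simpa using this
  -- combine
  have hEeq : E = (∫ x in a..b, (S x - (f x c + f x d) * ((d - c) / 2)))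
      + ((d - c) / 2) * ((∫ x in a..b, (f x c + f x d))
        - ((f a c + f a d) + (f b c + f b d)) * ((b - a) / 2)) := by
    rw [I1eq]
    have : (∫ x in a..b, S x) = (f a c + f b d + f a d + f b c) * ((b - a) * (d - c) / 4) + E := hE
    rw [this]; ring
  rw [hEeq]
  have step : |(∫ x in a..b, (S x - (f x c + f x d) * ((d - c) / 2)))
      + ((d - c) / 2) * ((∫ x in a..b, (f x c + f x d))
        - ((f a c + f a d) + (f b c + f b d)) * ((b - a) / 2))|
      ≤ M * (d - c) ^ 2 / 4 * (b - a) + ((d - c) / 2) * (2 * M * (b - a) ^ 2 / 4) := by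
    refine (abs_add_le _ _).trans (add_le_add I1bd ?_)
    rw [abs_mul, abs_of_nonneg (by linarith : (0:ℝ) ≤ (d - c) / 2)]
    exact mul_le_mul_of_nonneg_left outer (by linarith)
  refine step.trans ?_
  nlinarith [sq_nonneg (b - a), sq_nonneg (d - c), hN0, sq_nonneg ((b-a)*(d-c))]
end

section
/- Let f be C² on [a,b]×[c,d], let m₁ = (a+b)/2 and m₂ = (c+d)/2, and define E(f) by ∫_a^b∫_c^d f(x,y) dy dx = f(m₁,m₂)(b−a)(d−c) + E(f) (the two-dimensional midpoint rule). Then |E(f)| ≤ ‖f_x(·,m₂)‖_∞·(b−a)²(d−c)/4 + ‖f_y(m₁,·)‖_∞·(b−a)(d−c)²/4 + ‖f_{xy}‖_∞·(b−a)²(d−c)²/16. -/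
open MeasureTheory Set

/-- MVT-style bound on an interval, abs version. -/
lemma mvt_abs {s : Set ℝ} (hs : Convex ℝ s) {g g' : ℝ → ℝ}
    (hg : ∀ x ∈ s, HasDerivAt g (g' x) x) {C : ℝ}
    (hC : ∀ x ∈ s, |g' x| ≤ C) {x y : ℝ} (hx : x ∈ s) (hy : y ∈ s) :
    |g y - g x| ≤ C * |y - x| := by
  have := Convex.norm_image_sub_le_of_norm_hasDerivWithin_le
    (fun z hz => (hg z hz).hasDerivWithinAt)
    (fun z hz => by simpa [Real.norm_eq_abs] using hC z hz) hs hx hy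
  simpa [Real.norm_eq_abs] using this

lemma integral_abs_sub_mid {a b : ℝ} (hab : a ≤ b) :
    (∫ x in a..b, |x - (a + b) / 2|) = (b - a) ^ 2 / 4 := by
  set m := (a + b) / 2 with hm
  have ham : a ≤ m := by rw [hm]; linarith
  have hmb : m ≤ b := by rw [hm]; linarith
  have hI : ∀ u v : ℝ, IntervalIntegrable (fun x => |x - m|) volume u v :=
    fun u v => ((continuous_id.sub continuous_const).abs).intervalIntegrable u v
  have h1 : (∫ x in a..m, |x - m|) = (m - a) ^ 2 / 2 := by
    have e : (∫ x in a..m, |x - m|) = ∫ x in a..m, (m - x) := by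
      apply intervalIntegral.integral_congr
      intro x hx
      rw [uIcc_of_le ham] at hx
      dsimp only
      rw [abs_of_nonpos (by linarith [hx.2])]; ring
    rw [e, intervalIntegral.integral_sub (intervalIntegrable_const)
      (intervalIntegral.intervalIntegrable_id), intervalIntegral.integral_const,
      integral_id]
    simp only [smul_eq_mul]
    ring
  have h2 : (∫ x in m..b, |x - m|) = (b - m) ^ 2 / 2 := by
    have e : (∫ x in m..b, |x - m|) = ∫ x in m..b, (x - m) := by
      apply intervalIntegral.integral_congr
      intro x hx
      rw [uIcc_of_le hmb] at hx
      dsimp only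
      rw [abs_of_nonneg (by linarith [hx.1])]
    rw [e, intervalIntegral.integral_sub (intervalIntegral.intervalIntegrable_id)
      (intervalIntegrable_const), intervalIntegral.integral_const,
      integral_id]
    simp only [smul_eq_mul]
    ring
  have := intervalIntegral.integral_add_adjacent_intervals (hI a m) (hI m b)
  rw [← this, h1, h2, hm]
  ring

/-- Two-dimensional midpoint rule, p = ∞ error bound. -/
theorem stmt_5 (a b c d : ℝ) (hab : a < b) (hcd : c < d)
    (f fx fy fxy : ℝ → ℝ → ℝ)
(hfC : ContinuousOn (fun p : ℝ × ℝ => f p.1 p.2) (Icc a b ×ˢ Icc c d))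
    (hfx : ∀ x ∈ Icc a b, ∀ y ∈ Icc c d, HasDerivAt (fun x' => f x' y) (fx x y) x)
    (hfy : ∀ x ∈ Icc a b, ∀ y ∈ Icc c d, HasDerivAt (fun y' => f x y') (fy x y) y)
    (hfxy : ∀ x ∈ Icc a b, ∀ y ∈ Icc c d, HasDerivAt (fun y' => fx x y') (fxy x y) y)
    (hfxC : ContinuousOn (fun p : ℝ × ℝ => fx p.1 p.2) (Icc a b ×ˢ Icc c d))
    (hfyC : ContinuousOn (fun p : ℝ × ℝ => fy p.1 p.2) (Icc a b ×ˢ Icc c d))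
    (hfxyC : ContinuousOn (fun p : ℝ × ℝ => fxy p.1 p.2) (Icc a b ×ˢ Icc c d))
    (E : ℝ)
    (hE : (∫ x in a..b, ∫ y in c..d, f x y)
        = f ((a + b) / 2) ((c + d) / 2) * ((b - a) * (d - c)) + E) :
    |E| ≤ sSup ((fun x => |fx x ((c + d) / 2)|) '' Icc a b) * ((b - a) ^ 2 * (d - c) / 4)
        + sSup ((fun y => |fy ((a + b) / 2) y|) '' Icc c d) * ((b - a) * (d - c) ^ 2 / 4)
        + sSup ((fun p : ℝ × ℝ => |fxy p.1 p.2|) '' (Icc a b ×ˢ Icc c d))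
            * ((b - a) ^ 2 * (d - c) ^ 2 / 16) := by
  set m₁ := (a + b) / 2 with hm₁
  set m₂ := (c + d) / 2 with hm₂
  have hm₁mem : m₁ ∈ Icc a b := ⟨by rw [hm₁]; linarith, by rw [hm₁]; linarith⟩
  have hm₂mem : m₂ ∈ Icc c d := ⟨by rw [hm₂]; linarith, by rw [hm₂]; linarith⟩
  set Kx := sSup ((fun x => |fx x m₂|) '' Icc a b) with hKxdef
  set Ky := sSup ((fun y => |fy m₁ y|) '' Icc c d) with hKydef
  set A := sSup ((fun p : ℝ × ℝ => |fxy p.1 p.2|) '' (Icc a b ×ˢ Icc c d)) with hAdef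
  -- sup bounds
  have hKxC : ContinuousOn (fun x => |fx x m₂|) (Icc a b) := by
    apply ContinuousOn.abs
    exact hfxC.comp (Continuous.continuousOn (by fun_prop))
      (fun x hx => mk_mem_prod hx hm₂mem)
  have hKyC : ContinuousOn (fun y => |fy m₁ y|) (Icc c d) := by
    apply ContinuousOn.abs
    exact hfyC.comp (Continuous.continuousOn (by fun_prop))
      (fun y hy => mk_mem_prod hm₁mem hy)
  have hKxbdd : BddAbove ((fun x => |fx x m₂|) '' Icc a b) :=
    (isCompact_Icc.image_of_continuousOn hKxC).bddAbove
  have hKybdd : BddAbove ((fun y => |fy m₁ y|) '' Icc c d) :=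
    (isCompact_Icc.image_of_continuousOn hKyC).bddAbove
  have hAbdd : BddAbove ((fun p : ℝ × ℝ => |fxy p.1 p.2|) '' (Icc a b ×ˢ Icc c d)) :=
    (((isCompact_Icc.prod isCompact_Icc).image_of_continuousOn hfxyC.abs)).bddAbove
  have hKx : ∀ x ∈ Icc a b, |fx x m₂| ≤ Kx := fun x hx => le_csSup hKxbdd ⟨x, hx, rfl⟩
  have hKy : ∀ y ∈ Icc c d, |fy m₁ y| ≤ Ky := fun y hy => le_csSup hKybdd ⟨y, hy, rfl⟩
  have hA : ∀ x ∈ Icc a b, ∀ y ∈ Icc c d, |fxy x y| ≤ A :=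
    fun x hx y hy => le_csSup hAbdd ⟨(x, y), mk_mem_prod hx hy, rfl⟩
  -- pointwise bound
  have key : ∀ x ∈ Icc a b, ∀ y ∈ Icc c d,
      |f x y - f m₁ m₂| ≤ (A * |x - m₁| + Ky) * |y - m₂| + Kx * |x - m₁| := by
    intro x hx y hy
    have h1 : |f x m₂ - f m₁ m₂| ≤ Kx * |x - m₁| :=
      mvt_abs (convex_Icc a b) (fun z hz => hfx z hz m₂ hm₂mem) hKx hm₁mem hx
    have h2 : |f m₁ y - f m₁ m₂| ≤ Ky * |y - m₂| :=
      mvt_abs (convex_Icc c d) (fun z hz => hfy m₁ hm₁mem z hz) hKy hm₂mem hy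
    have h3 : |(f x y - f x m₂) - (f m₁ y - f m₁ m₂)| ≤ (A * |y - m₂|) * |x - m₁| := by
      apply mvt_abs (convex_Icc a b)
        (g := fun x' => f x' y - f x' m₂) (g' := fun x' => fx x' y - fx x' m₂)
        _ _ hm₁mem hx
      · intro z hz; exact (hfx z hz y hy).sub (hfx z hz m₂ hm₂mem)
      · intro z hz
        have := mvt_abs (convex_Icc c d) (fun w hw => hfxy z hz w hw)
          (fun w hw => hA z hz w hw) hm₂mem hy
        calc |fx z y - fx z m₂| ≤ A * |y - m₂| := this
          _ = A * |y - m₂| := rfl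
    have e : f x y - f m₁ m₂ = ((f x y - f x m₂) - (f m₁ y - f m₁ m₂))
        + (f x m₂ - f m₁ m₂) + (f m₁ y - f m₁ m₂) := by ring
    rw [e]
    have := abs_add_three ((f x y - f x m₂) - (f m₁ y - f m₁ m₂))
      (f x m₂ - f m₁ m₂) (f m₁ y - f m₁ m₂)
    nlinarith [this, h1, h2, h3]
  -- integrability of f x · on [c,d]
  have hfint : ∀ x ∈ Icc a b, IntervalIntegrable (fun y => f x y) volume c d := by
    intro x hx
    apply ContinuousOn.intervalIntegrable
    rw [uIcc_of_le hcd.le]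
    exact hfC.comp (Continuous.continuousOn (by fun_prop))
      (fun y hy => mk_mem_prod hx hy)
  -- continuity of F₀ via clamping
  set F₀ : ℝ → ℝ := fun x => ∫ y in c..d, f x y with hF₀def
  have hclx : ∀ t : ℝ, max a (min t b) ∈ Icc a b :=
    fun t => ⟨le_max_left _ _, max_le hab.le (min_le_right _ _)⟩
  have hcly : ∀ t : ℝ, max c (min t d) ∈ Icc c d :=
    fun t => ⟨le_max_left _ _, max_le hcd.le (min_le_right _ _)⟩
  have hgcont : Continuous (Function.uncurry
      (fun x y => f (max a (min x b)) (max c (min y d)))) := by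
    have : Function.uncurry (fun x y => f (max a (min x b)) (max c (min y d)))
        = (fun p : ℝ × ℝ => f p.1 p.2) ∘
          (fun p : ℝ × ℝ => (max a (min p.1 b), max c (min p.2 d))) := rfl
    rw [this]
    exact hfC.comp_continuous (by fun_prop) (fun p => mk_mem_prod (hclx _) (hcly _))
  have hFtcont : Continuous (fun x => ∫ y in c..d, f (max a (min x b)) (max c (min y d))) :=
    intervalIntegral.continuous_parametric_intervalIntegral_of_continuous' hgcont c d
  have hF₀cont : ContinuousOn F₀ (Icc a b) := by
    apply hFtcont.continuousOn.congr
    intro x hx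
    rw [hF₀def]
    apply intervalIntegral.integral_congr
    intro y hy
    rw [uIcc_of_le hcd.le] at hy
    have hxe : max a (min x b) = x := by
      rw [min_eq_left hx.2, max_eq_right hx.1]
    have hye : max c (min y d) = y := by
      rw [min_eq_left hy.2, max_eq_right hy.1]
    dsimp only
    rw [hxe, hye]
  have hF₀int : IntervalIntegrable F₀ volume a b := by
    apply ContinuousOn.intervalIntegrable
    rwa [uIcc_of_le hab.le]
  -- E as an integral
  have hEeq : E = ∫ x in a..b, (F₀ x - (d - c) * f m₁ m₂) := by
    rw [intervalIntegral.integral_sub hF₀int intervalIntegrable_const,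
      intervalIntegral.integral_const]
    have : (∫ x in a..b, F₀ x) = f m₁ m₂ * ((b - a) * (d - c)) + E := hE
    rw [this]; simp [smul_eq_mul]; ring
  -- inner bound
  set c₁ : ℝ := A * ((d - c) ^ 2 / 4) + Kx * (d - c) with hc₁def
  set c₂ : ℝ := Ky * ((d - c) ^ 2 / 4) with hc₂def
  have hKxnn : 0 ≤ Kx := le_trans (abs_nonneg _) (hKx m₁ hm₁mem)
  have hKynn : 0 ≤ Ky := le_trans (abs_nonneg _) (hKy m₂ hm₂mem)
  have hAnn : 0 ≤ A := le_trans (abs_nonneg _) (hA m₁ hm₁mem m₂ hm₂mem)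
  have hinner : ∀ x ∈ Icc a b,
      |F₀ x - (d - c) * f m₁ m₂| ≤ c₁ * |x - m₁| + c₂ := by
    intro x hx
    have h1 : F₀ x - (d - c) * f m₁ m₂ = ∫ y in c..d, (f x y - f m₁ m₂) := by
      rw [intervalIntegral.integral_sub (hfint x hx) intervalIntegrable_const,
        intervalIntegral.integral_const]
      simp [smul_eq_mul, hF₀def]
    rw [h1]
    have habs : |∫ y in c..d, (f x y - f m₁ m₂)| ≤ ∫ y in c..d, |f x y - f m₁ m₂| :=
      intervalIntegral.abs_integral_le_integral_abs hcd.le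
    have hintabs : IntervalIntegrable (fun y => |f x y - f m₁ m₂|) volume c d :=
      ((hfint x hx).sub intervalIntegrable_const).abs
    have hintbnd : IntervalIntegrable
        (fun y => (A * |x - m₁| + Ky) * |y - m₂| + Kx * |x - m₁|) volume c d := by
      apply Continuous.intervalIntegrable; fun_prop
    have hmono : (∫ y in c..d, |f x y - f m₁ m₂|)
        ≤ ∫ y in c..d, ((A * |x - m₁| + Ky) * |y - m₂| + Kx * |x - m₁|) :=
      intervalIntegral.integral_mono_on hcd.le hintabs hintbnd
        (fun y hy => key x hx y hy)
    have hcomp : (∫ y in c..d, ((A * |x - m₁| + Ky) * |y - m₂| + Kx * |x - m₁|))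
        = c₁ * |x - m₁| + c₂ := by
      rw [intervalIntegral.integral_add
        (by apply Continuous.intervalIntegrable; fun_prop)
        (by apply Continuous.intervalIntegrable; fun_prop),
        intervalIntegral.integral_const_mul, intervalIntegral.integral_const]
      rw [hm₂] at *
      rw [integral_abs_sub_mid hcd.le]
      simp only [smul_eq_mul, hc₁def, hc₂def]
      ring
    calc |∫ y in c..d, (f x y - f m₁ m₂)| ≤ ∫ y in c..d, |f x y - f m₁ m₂| := habs
      _ ≤ _ := hmono
      _ = c₁ * |x - m₁| + c₂ := hcomp
  -- outer bound
  have habs2 : |E| ≤ ∫ x in a..b, |F₀ x - (d - c) * f m₁ m₂| := by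
    rw [hEeq]
    exact intervalIntegral.abs_integral_le_integral_abs hab.le
  have hintabs2 : IntervalIntegrable (fun x => |F₀ x - (d - c) * f m₁ m₂|) volume a b :=
    (hF₀int.sub intervalIntegrable_const).abs
  have hintbnd2 : IntervalIntegrable (fun x => c₁ * |x - m₁| + c₂) volume a b := by
    apply Continuous.intervalIntegrable; fun_prop
  have hmono2 : (∫ x in a..b, |F₀ x - (d - c) * f m₁ m₂|)
      ≤ ∫ x in a..b, (c₁ * |x - m₁| + c₂) :=
    intervalIntegral.integral_mono_on hab.le hintabs2 hintbnd2 hinner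
  have hcomp2 : (∫ x in a..b, (c₁ * |x - m₁| + c₂))
      = c₁ * ((b - a) ^ 2 / 4) + c₂ * (b - a) := by
    rw [intervalIntegral.integral_add
      (by apply Continuous.intervalIntegrable; fun_prop)
      (by apply Continuous.intervalIntegrable; fun_prop),
      intervalIntegral.integral_const_mul, intervalIntegral.integral_const]
    rw [hm₁] at *
    rw [integral_abs_sub_mid hab.le]
    simp only [smul_eq_mul]
    ring
  have final : |E| ≤ c₁ * ((b - a) ^ 2 / 4) + c₂ * (b - a) := by
    calc |E| ≤ ∫ x in a..b, |F₀ x - (d - c) * f m₁ m₂| := habs2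
      _ ≤ ∫ x in a..b, (c₁ * |x - m₁| + c₂) := hmono2
      _ = _ := hcomp2
  calc |E| ≤ c₁ * ((b - a) ^ 2 / 4) + c₂ * (b - a) := final
    _ = Kx * ((b - a) ^ 2 * (d - c) / 4) + Ky * ((b - a) * (d - c) ^ 2 / 4)
        + A * ((b - a) ^ 2 * (d - c) ^ 2 / 16) := by
        rw [hc₁def, hc₂def]; ring
end

section
/- Let f be C² on [−1,1]×[−1,1] and define γ : [−1,1] → ℝ by γ(x) = x+1 for x < 0 and γ(x) = x−1 for x > 0 (arbitrary at 0). Then ∫_{−1}^1∫_{−1}^1 f(s,t) dt ds = 4f(0,0) − 2∫_{−1}^1 f_s(s,0)γ(s) ds − 2∫_{−1}^1 f_t(0,t)γ(t) dt + ∫_{−1}^1∫_{−1}^1 f_{st}(s,t)γ(s)γ(t) dt ds. -/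
/-!
In one variable, integrating by parts against `x + 1` on `[-1, 0]` and against `x - 1` on
`[0, 1]` gives `∫ g = 2 g(0) - ∫ g' γ`: the boundary terms vanish at `±1` and add up to `2 g(0)`
at the jump. Apply this in `s` for each fixed `t` (after exchanging the order of integration),
then in `t` to the two resulting terms: to `f(0, ·)`, and, after a second exchange, to
`t ↦ fs(s, t)` with the weight `γ(s)` carried along.
-/

open MeasureTheory Set intervalIntegral Function

open scoped Interval

section IntegrationByParts

variable {a b d : ℝ} {g w : ℝ → ℝ}

theorem IntervalIntegrable.mul_of_eqOn_sub (hg : IntervalIntegrable g volume a b)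
    (hw : EqOn w (fun x => x - d) (uIoo a b)) :
    IntervalIntegrable (fun x => g x * w x) volume a b :=
  (hg.mul_continuousOn (g := fun x => x - d) (by fun_prop)).congr_uIoo fun x hx => by
    simp only [hw hx]

theorem integral_eq_sub_integral_deriv_mul_of_eqOn_sub {g' : ℝ → ℝ}
    (hg : ∀ x ∈ [[a, b]], HasDerivAt g (g' x) x) (hg' : IntervalIntegrable g' volume a b)
    (hw : EqOn w (fun x => x - d) (uIoo a b)) :
    ∫ x in a..b, g x = g b * (b - d) - g a * (a - d) - ∫ x in a..b, g' x * w x := by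
  have hw' : ∫ x in a..b, g' x * w x = ∫ x in a..b, g' x * (x - d) :=
    integral_congr_uIoo fun x hx => by simp only [hw hx]
  rw [hw']
  simpa using integral_mul_deriv_eq_deriv_mul hg (fun x _ => (hasDerivAt_id x).sub_const d) hg'
    intervalIntegrable_const

end IntegrationByParts

/-- The Peano kernel of the rule `∫ x in a..b, g x ≈ (b - a) * g c`. -/
def IsSawtoothOn (a c b : ℝ) (w : ℝ → ℝ) : Prop :=
  EqOn w (fun x => x - a) (Ioo a c) ∧ EqOn w (fun x => x - b) (Ioo c b)

namespace IsSawtoothOn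

variable {a b c : ℝ} {w : ℝ → ℝ}

theorem intervalIntegrable_mul (hw : IsSawtoothOn a c b w) (hac : a ≤ c) (hcb : c ≤ b)
    {g : ℝ → ℝ} (hg : IntervalIntegrable g volume a b) :
    IntervalIntegrable (fun x => g x * w x) volume a b := by
  have hc : c ∈ [[a, b]] := mem_uIcc_of_le hac hcb
  exact ((hg.mono_set (uIcc_subset_uIcc_left hc)).mul_of_eqOn_sub (uIoo_of_le hac ▸ hw.1)).trans
    ((hg.mono_set (uIcc_subset_uIcc_right hc)).mul_of_eqOn_sub (uIoo_of_le hcb ▸ hw.2))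

theorem integral_eq_sub_integral_deriv_mul (hw : IsSawtoothOn a c b w) (hac : a ≤ c) (hcb : c ≤ b)
    {g g' : ℝ → ℝ} (hg : ∀ x ∈ Icc a b, HasDerivAt g (g' x) x)
    (hg' : IntervalIntegrable g' volume a b) :
    ∫ x in a..b, g x = (b - a) * g c - ∫ x in a..b, g' x * w x := by
  have hab := hac.trans hcb
  have hc : c ∈ [[a, b]] := mem_uIcc_of_le hac hcb
  have hac' : [[a, c]] ⊆ Icc a b := uIcc_subset_Icc (left_mem_Icc.2 hab) ⟨hac, hcb⟩
  have hcb' : [[c, b]] ⊆ Icc a b := uIcc_subset_Icc ⟨hac, hcb⟩ (right_mem_Icc.2 hab)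
  have hgI : IntervalIntegrable g volume a b :=
    ContinuousOn.intervalIntegrable_of_Icc hab fun x hx => (hg x hx).continuousAt.continuousWithinAt
  have hg'w := hw.intervalIntegrable_mul hac hcb hg'
  rw [← integral_add_adjacent_intervals (hgI.mono_set (uIcc_subset_uIcc_left hc))
      (hgI.mono_set (uIcc_subset_uIcc_right hc)),
    ← integral_add_adjacent_intervals (hg'w.mono_set (uIcc_subset_uIcc_left hc))
      (hg'w.mono_set (uIcc_subset_uIcc_right hc)),
    integral_eq_sub_integral_deriv_mul_of_eqOn_sub (fun x hx => hg x (hac' hx))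
      (hg'.mono_set (uIcc_subset_uIcc_left hc)) (uIoo_of_le hac ▸ hw.1),
    integral_eq_sub_integral_deriv_mul_of_eqOn_sub (fun x hx => hg x (hcb' hx))
      (hg'.mono_set (uIcc_subset_uIcc_right hc)) (uIoo_of_le hcb ▸ hw.2)]
  ring

end IsSawtoothOn

section Fubini

variable {a b : ℝ}

theorem ContinuousOn.integrable_prod_mul_mul {F : ℝ → ℝ → ℝ}
    (hF : ContinuousOn (uncurry F) (Icc a b ×ˢ Icc a b)) {u v : ℝ → ℝ}
    (hu : IntervalIntegrable u volume a b) (hv : IntervalIntegrable v volume a b) (hab : a ≤ b) :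
    Integrable (uncurry fun s t => F s t * u s * v t)
      ((volume.restrict (Ioc a b)).prod (volume.restrict (Ioc a b))) := by
  rw [intervalIntegrable_iff_integrableOn_Ioc_of_le hab] at hu hv
  have hS : MeasurableSet (Ioc a b ×ˢ Ioc a b) := measurableSet_Ioc.prod measurableSet_Ioc
  have hsub : Ioc a b ×ˢ Ioc a b ⊆ Icc a b ×ˢ Icc a b :=
    prod_mono Ioc_subset_Icc_self Ioc_subset_Icc_self
  obtain ⟨C, hC⟩ := (isCompact_Icc.prod isCompact_Icc).exists_bound_of_continuousOn hF
  have huv := hu.mul_prod hv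
  rw [Measure.prod_restrict, ← Measure.volume_eq_prod] at huv ⊢
  simp only [uncurry_def, mul_assoc]
  exact huv.bdd_mul ((hF.mono hsub).aestronglyMeasurable hS)
    (by filter_upwards [ae_restrict_mem hS] with p hp using hC p (hsub hp))

theorem intervalIntegral_integral_swap {F : ℝ → ℝ → ℝ}
    (hF : Integrable (uncurry F) ((volume.restrict (Ioc a b)).prod (volume.restrict (Ioc a b))))
    (hab : a ≤ b) :
    ∫ s in a..b, ∫ t in a..b, F s t = ∫ t in a..b, ∫ s in a..b, F s t := by
  simp only [integral_of_le hab]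
  exact integral_integral_swap hF

theorem MeasureTheory.Integrable.intervalIntegrable_integral_prod_left {F : ℝ → ℝ → ℝ}
    (hF : Integrable (uncurry F) ((volume.restrict (Ioc a b)).prod (volume.restrict (Ioc a b))))
    (hab : a ≤ b) :
    IntervalIntegrable (fun s => ∫ t in a..b, F s t) volume a b := by
  rw [intervalIntegrable_iff_integrableOn_Ioc_of_le hab]
  simp only [integral_of_le hab]
  exact hF.integral_prod_left

end Fubini

theorem IsSawtoothOn.integral_integral_mul_eq {a b c : ℝ} {w : ℝ → ℝ} (hw : IsSawtoothOn a c b w)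
    (hac : a ≤ c) (hcb : c ≤ b) {G H : ℝ → ℝ → ℝ}
    (hGC : ContinuousOn (uncurry G) (Icc a b ×ˢ Icc a b))
    (hG : ∀ s ∈ Icc a b, ∀ t ∈ Icc a b, HasDerivAt (G s) (H s t) t)
    (hHC : ContinuousOn (uncurry H) (Icc a b ×ˢ Icc a b))
    {u : ℝ → ℝ} (hu : IntervalIntegrable u volume a b) :
    ∫ s in a..b, ∫ t in a..b, G s t * u s =
      (b - a) * (∫ s in a..b, G s c * u s) - ∫ s in a..b, ∫ t in a..b, H s t * u s * w t := by
  have hab := hac.trans hcb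
  have hc : c ∈ Icc a b := ⟨hac, hcb⟩
  have hwI : IntervalIntegrable w volume a b := by
    simpa using hw.intervalIntegrable_mul hac hcb (g := fun _ => 1) intervalIntegrable_const
  have hGc : IntervalIntegrable (fun s => (b - a) * (G s c * u s)) volume a b :=
    (hu.continuousOn_mul (by rw [uIcc_of_le hab]; exact hGC.uncurry_right c hc)).const_mul _
  have hHuw : IntervalIntegrable (fun s => ∫ t in a..b, H s t * u s * w t) volume a b :=
    (hHC.integrable_prod_mul_mul hu hwI hab).intervalIntegrable_integral_prod_left hab
  calc ∫ s in a..b, ∫ t in a..b, G s t * u s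
      = ∫ s in a..b, ((b - a) * (G s c * u s) - ∫ t in a..b, H s t * u s * w t) := by
        refine integral_congr fun s hs => ?_
        rw [uIcc_of_le hab] at hs
        have hHs : IntervalIntegrable (H s) volume a b :=
          ContinuousOn.intervalIntegrable_of_Icc hab (hHC.uncurry_left s hs)
        rw [intervalIntegral.integral_mul_const,
          hw.integral_eq_sub_integral_deriv_mul hac hcb (hG s hs) hHs]
        simp only [mul_right_comm (H s _) (u s), intervalIntegral.integral_mul_const]
        ring
    _ = (b - a) * (∫ s in a..b, G s c * u s) - ∫ s in a..b, ∫ t in a..b, H s t * u s * w t := by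
        rw [integral_sub hGc hHuw, intervalIntegral.integral_const_mul]

/-- Midpoint rule identity on the square [-1,1]² via the sawtooth γ. -/
theorem stmt_6 (f fs ft fst : ℝ → ℝ → ℝ)
(hfC : ContinuousOn (fun p : ℝ × ℝ => f p.1 p.2) (Icc (-1) 1 ×ˢ Icc (-1) 1))
    (hfs : ∀ s ∈ Icc (-1 : ℝ) 1, ∀ t ∈ Icc (-1 : ℝ) 1, HasDerivAt (fun s' => f s' t) (fs s t) s)
    (hft : ∀ s ∈ Icc (-1 : ℝ) 1, ∀ t ∈ Icc (-1 : ℝ) 1, HasDerivAt (fun t' => f s t') (ft s t) t)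
    (hfst : ∀ s ∈ Icc (-1 : ℝ) 1, ∀ t ∈ Icc (-1 : ℝ) 1, HasDerivAt (fun t' => fs s t') (fst s t) t)
    (hfsC : ContinuousOn (fun p : ℝ × ℝ => fs p.1 p.2) (Icc (-1) 1 ×ˢ Icc (-1) 1))
    (hftC : ContinuousOn (fun p : ℝ × ℝ => ft p.1 p.2) (Icc (-1) 1 ×ˢ Icc (-1) 1))
    (hfstC : ContinuousOn (fun p : ℝ × ℝ => fst p.1 p.2) (Icc (-1) 1 ×ˢ Icc (-1) 1))
    (γ : ℝ → ℝ)
    (hγneg : ∀ x : ℝ, x < 0 → γ x = x + 1)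
    (hγpos : ∀ x : ℝ, 0 < x → γ x = x - 1) :
    (∫ s in (-1 : ℝ)..1, ∫ t in (-1 : ℝ)..1, f s t) =
      4 * f 0 0
      - 2 * (∫ s in (-1 : ℝ)..1, fs s 0 * γ s)
      - 2 * (∫ t in (-1 : ℝ)..1, ft 0 t * γ t)
      + ∫ s in (-1 : ℝ)..1, ∫ t in (-1 : ℝ)..1, fst s t * γ s * γ t := by
  have hγ : IsSawtoothOn (-1) 0 1 γ :=
    ⟨fun x hx => by rw [hγneg x hx.2]; ring, fun x hx => hγpos x hx.1⟩
  have hneg : (-1 : ℝ) ≤ 0 := by norm_num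
  have hpos : (0 : ℝ) ≤ 1 := by norm_num
  have h₀ : (0 : ℝ) ∈ Icc (-1 : ℝ) 1 := ⟨hneg, hpos⟩
  have hone : IntervalIntegrable (fun _ => (1 : ℝ)) volume (-1) 1 := intervalIntegrable_const
  have hγI : IntervalIntegrable γ volume (-1) 1 := by
    simpa using hγ.intervalIntegrable_mul hneg hpos hone
  have hfC' : ContinuousOn (uncurry fun t s => f s t) (Icc (-1) 1 ×ˢ Icc (-1) 1) :=
    hfC.comp continuous_swap.continuousOn fun p hp => ⟨hp.2, hp.1⟩
  have hfsC' : ContinuousOn (uncurry fun t s => fs s t) (Icc (-1) 1 ×ˢ Icc (-1) 1) :=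
    hfsC.comp continuous_swap.continuousOn fun p hp => ⟨hp.2, hp.1⟩
  have swap_f : ∫ s in (-1 : ℝ)..1, ∫ t in (-1 : ℝ)..1, f s t
      = ∫ t in (-1 : ℝ)..1, ∫ s in (-1 : ℝ)..1, f s t :=
    intervalIntegral_integral_swap (by simpa using hfC.integrable_prod_mul_mul hone hone)
      (hneg.trans hpos)
  have swap_fs : ∫ t in (-1 : ℝ)..1, ∫ s in (-1 : ℝ)..1, fs s t * γ s
      = ∫ s in (-1 : ℝ)..1, ∫ t in (-1 : ℝ)..1, fs s t * γ s :=
    (intervalIntegral_integral_swap (by simpa using hfsC.integrable_prod_mul_mul hγI hone)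
      (hneg.trans hpos)).symm
  have in_s := hγ.integral_integral_mul_eq hneg hpos hfC' (fun t ht s hs => hfs s hs t ht) hfsC'
    hone
  have at_s₀ := hγ.integral_eq_sub_integral_deriv_mul hneg hpos (hft 0 h₀)
    (ContinuousOn.intervalIntegrable_of_Icc (hneg.trans hpos) (hftC.uncurry_left 0 h₀))
  have in_t := hγ.integral_integral_mul_eq hneg hpos hfsC hfst hfstC hγI
  simp only [mul_one] at in_s
  rw [swap_f, in_s, at_s₀, swap_fs, in_t]
  ring
end

section
/- Let f be C² on [a,b]×[c,d]. Partition [a,b] into m equal subintervals with midpoints m_i and [c,d] into n equal subintervals with midpoints n_j. Define E(f) by ∫_a^b∫_c^d f dy dx = Σ_{i=1}^m Σ_{j=1}^n f(m_i,n_j)·(b−a)(d−c)/(mn) + E(f). If |∇f| ≤ M and |f_{xy}| ≤ N everywhere on [a,b]×[c,d], then |E(f)| ≤ M(b−a)²(d−c)/(4m) + M(b−a)(d−c)²/(4n) + N(b−a)²(d−c)²/(4mn). -/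
/-!
Along each coordinate the gradient bound makes `f` `M`-Lipschitz (mean value theorem), and for a
`K`-Lipschitz function the midpoint rule on an interval of length `h` errs by at most
`K ∫ |t - midpoint| dt = K h² / 4`. The partial integral `F x = ∫_c^d f x y dy` is
`M (d - c)`-Lipschitz, and the error splits as
`(∫ F - Σᵢ F(mᵢ) Δx) + Δx Σᵢ (F(mᵢ) - Σⱼ f(mᵢ, nⱼ) Δy)`. The composite one-dimensional rule,
applied to `F` and to each `f(mᵢ, ·)`, bounds the two parts by the first two terms of the claimed
bound; the last term is nonnegative.
-/

open MeasureTheory Set intervalIntegral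
open scoped NNReal

theorem add_mul_div_mem_Icc {a b t : ℝ} {m : ℕ} (hab : a ≤ b) (hm : 0 < m) (ht₀ : 0 ≤ t)
    (ht : t ≤ m) : a + t * ((b - a) / m) ∈ Icc a b := by
  have hm' : (0 : ℝ) < m := Nat.cast_pos.2 hm
  have hstep : 0 ≤ (b - a) / m := div_nonneg (sub_nonneg.2 hab) hm'.le
  refine ⟨le_add_of_nonneg_right (mul_nonneg ht₀ hstep), ?_⟩
  calc a + t * ((b - a) / m) ≤ a + m * ((b - a) / m) := by gcongr
    _ = b := by field_simp; ring

theorem integral_abs_sub_midpoint {u v : ℝ} (huv : u ≤ v) :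
    ∫ t in u..v, |t - (u + v) / 2| = (v - u) ^ 2 / 4 := by
  set p := (u + v) / 2 with hp
  have hup : u ≤ p := by linarith
  have hpv : p ≤ v := by linarith
  have half : ∀ w, ∫ t in uIoc p w, |t - p| = (w - p) ^ 2 / 2 := fun w => by
    simpa [sq_abs, one_add_one_eq_two] using integral_pow_abs_sub_uIoc (a := p) (b := w) (n := 1)
  have hint : ∀ r s : ℝ, IntervalIntegrable (fun t => |t - p|) volume r s := fun r s =>
    (continuous_id.sub continuous_const).abs.intervalIntegrable r s
  rw [← integral_add_adjacent_intervals (hint u p) (hint p v), integral_of_le hup,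
    integral_of_le hpv, ← uIoc_of_le hup, ← uIoc_of_le hpv, uIoc_comm, half, half]
  ring

theorem lipschitzOnWith_of_hasDerivAt_of_abs_le {g g' : ℝ → ℝ} {s : Set ℝ} {C : ℝ}
    (hs : Convex ℝ s) (hg : ∀ t ∈ s, HasDerivAt g (g' t) t)
    (hbound : ∀ t ∈ s, |g' t| ≤ C) :
    LipschitzOnWith C.toNNReal g s :=
  hs.lipschitzOnWith_of_nnnorm_hasDerivWithin_le (fun t ht => (hg t ht).hasDerivWithinAt)
    fun t ht => by
      rw [← NNReal.coe_le_coe, coe_nnnorm, Real.coe_toNNReal', Real.norm_eq_abs]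
      exact (hbound t ht).trans (le_max_left _ _)

theorem lipschitzOnWith_intervalIntegral {f : ℝ → ℝ → ℝ} {s : Set ℝ} {K : ℝ≥0} {c d : ℝ}
    (hcd : c ≤ d) (hint : ∀ x ∈ s, IntervalIntegrable (f x) volume c d)
    (hf : ∀ y ∈ Icc c d, LipschitzOnWith K (fun x => f x y) s) :
    LipschitzOnWith (K * (d - c).toNNReal) (fun x => ∫ y in c..d, f x y) s := by
  refine LipschitzOnWith.of_dist_le_mul fun x hx x' hx' => ?_
  rw [Real.dist_eq, ← integral_sub (hint x hx) (hint x' hx'), ← Real.norm_eq_abs,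
    NNReal.coe_mul, Real.coe_toNNReal _ (sub_nonneg.2 hcd)]
  calc ‖∫ y in c..d, (f x y - f x' y)‖ ≤ K * dist x x' * |d - c| :=
        norm_integral_le_of_norm_le_const fun y hy => by
          rw [← dist_eq_norm]
          exact (hf y (uIcc_of_le hcd ▸ uIoc_subset_uIcc hy)).dist_le_mul x hx x' hx'
    _ = K * (d - c) * dist x x' := by rw [abs_of_nonneg (sub_nonneg.2 hcd)]; ring

theorem Finset.abs_sum_le_card_mul {ι : Type*} {s : Finset ι} {t : ι → ℝ} {C : ℝ}
    (h : ∀ i ∈ s, |t i| ≤ C) : |∑ i ∈ s, t i| ≤ s.card * C :=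
  (abs_sum_le_sum_abs _ _).trans <| by simpa using sum_le_card_nsmul _ _ _ h

theorem abs_integral_sub_mul_midpoint_le {g : ℝ → ℝ} {u v : ℝ} {K : ℝ≥0} (huv : u ≤ v)
    (hg : LipschitzOnWith K g (Icc u v)) :
    |(∫ t in u..v, g t) - g ((u + v) / 2) * (v - u)| ≤ K * (v - u) ^ 2 / 4 := by
  set p := (u + v) / 2 with hp
  have hp_mem : p ∈ Icc u v := ⟨by linarith, by linarith⟩
  have hint : IntervalIntegrable g volume u v := hg.continuousOn.intervalIntegrable_of_Icc huv
  have hbound : IntervalIntegrable (fun t => (K : ℝ) * |t - p|) volume u v :=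
    (continuous_const.mul (continuous_id.sub continuous_const).abs).intervalIntegrable u v
  rw [show (∫ t in u..v, g t) - g p * (v - u) = ∫ t in u..v, (g t - g p) by
    rw [integral_sub hint intervalIntegrable_const, intervalIntegral.integral_const, smul_eq_mul,
      mul_comm],
    ← Real.norm_eq_abs]
  calc ‖∫ t in u..v, (g t - g p)‖ ≤ ∫ t in u..v, (K : ℝ) * |t - p| :=
        norm_integral_le_of_norm_le huv (ae_of_all _ fun t ht => by
          simpa only [dist_eq_norm, Real.norm_eq_abs] using
            hg.dist_le_mul t (Ioc_subset_Icc_self ht) p hp_mem) hbound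
    _ = K * (v - u) ^ 2 / 4 := by
        rw [intervalIntegral.integral_const_mul, integral_abs_sub_midpoint huv]
        ring

theorem abs_integral_sub_midpoint_sum_le {g : ℝ → ℝ} {a b : ℝ} {K : ℝ≥0} {m : ℕ} (hab : a ≤ b)
    (hm : 0 < m) (hg : LipschitzOnWith K g (Icc a b)) :
    |(∫ x in a..b, g x) - (∑ i ∈ Finset.range m, g (a + ((i : ℝ) + 1 / 2) * ((b - a) / m)))
        * ((b - a) / m)| ≤ K * (b - a) ^ 2 / (4 * m) := by
  set h := (b - a) / m with hh
  set x : ℕ → ℝ := fun k => a + k * h with hx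
  have hx_mem : ∀ k ≤ m, x k ∈ Icc a b := fun k hk =>
    add_mul_div_mem_Icc hab hm k.cast_nonneg (Nat.cast_le.2 hk)
  have hcell : ∀ i < m, |(∫ t in x i..x (i + 1), g t) - g (a + ((i : ℝ) + 1 / 2) * h) * h|
      ≤ K * h ^ 2 / 4 := fun i hi => by
    have hstep : x (i + 1) - x i = h := by simp only [hx]; push_cast; ring
    have hmid : (x i + x (i + 1)) / 2 = a + ((i : ℝ) + 1 / 2) * h := by
      simp only [hx]; push_cast; ring
    have hle : x i ≤ x (i + 1) := by
      rw [← sub_nonneg, hstep]; exact div_nonneg (sub_nonneg.2 hab) (Nat.cast_nonneg m)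
    simpa only [hstep, hmid] using abs_integral_sub_mul_midpoint_le hle
      (hg.mono (Icc_subset_Icc (hx_mem i hi.le).1 (hx_mem (i + 1) hi).2))
  have hsplit : ∫ t in a..b, g t = ∑ i ∈ Finset.range m, ∫ t in x i..x (i + 1), g t := by
    rw [sum_integral_adjacent_intervals fun k hk => (hg.continuousOn.mono
      (uIcc_subset_Icc (hx_mem k hk.le) (hx_mem (k + 1) hk))).intervalIntegrable]
    have hm' : (m : ℝ) ≠ 0 := Nat.cast_ne_zero.2 hm.ne'
    simp only [hx, hh, Nat.cast_zero, zero_mul, add_zero]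
    rw [mul_div_cancel₀ _ hm', add_sub_cancel]
  calc _ = |∑ i ∈ Finset.range m,
        ((∫ t in x i..x (i + 1), g t) - g (a + ((i : ℝ) + 1 / 2) * h) * h)| := by
        rw [hsplit, Finset.sum_mul, Finset.sum_sub_distrib]
    _ ≤ m * (K * h ^ 2 / 4) := by
        simpa only [Finset.card_range] using
          Finset.abs_sum_le_card_mul fun i hi => hcell i (Finset.mem_range.1 hi)
    _ = K * (b - a) ^ 2 / (4 * m) := by
        rw [hh]
        field_simp

theorem abs_integral_integral_sub_midpoint_sum_le {f : ℝ → ℝ → ℝ} {a b c d : ℝ} {K L : ℝ≥0}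
    {m n : ℕ} (hab : a ≤ b) (hcd : c ≤ d) (hm : 0 < m) (hn : 0 < n)
    (hK : ∀ y ∈ Icc c d, LipschitzOnWith K (fun x => f x y) (Icc a b))
    (hL : ∀ x ∈ Icc a b, LipschitzOnWith L (f x) (Icc c d)) :
    |(∫ x in a..b, ∫ y in c..d, f x y)
        - (∑ i ∈ Finset.range m, ∑ j ∈ Finset.range n,
            f (a + ((i : ℝ) + 1 / 2) * ((b - a) / m)) (c + ((j : ℝ) + 1 / 2) * ((d - c) / n)))
          * ((b - a) / m * ((d - c) / n))|
      ≤ K * (b - a) ^ 2 * (d - c) / (4 * m) + L * (b - a) * (d - c) ^ 2 / (4 * n) := by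
  set Δx := (b - a) / m with hΔx
  set Δy := (d - c) / n
  set mid : ℕ → ℝ := fun i => a + ((i : ℝ) + 1 / 2) * Δx
  have houter := abs_integral_sub_midpoint_sum_le hab hm
    (lipschitzOnWith_intervalIntegral hcd
      (fun x hx => (hL x hx).continuousOn.intervalIntegrable_of_Icc hcd) hK)
  rw [NNReal.coe_mul, Real.coe_toNNReal _ (sub_nonneg.2 hcd)] at houter
  have hinner : ∀ i ∈ Finset.range m,
      |(∫ y in c..d, f (mid i) y)
        - (∑ j ∈ Finset.range n, f (mid i) (c + ((j : ℝ) + 1 / 2) * Δy)) * Δy|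
        ≤ L * (d - c) ^ 2 / (4 * n) := fun i hi => by
    have hi' : (i : ℝ) + 1 ≤ m := by exact_mod_cast Finset.mem_range.1 hi
    exact abs_integral_sub_midpoint_sum_le hcd hn
      (hL _ (add_mul_div_mem_Icc hab hm (by positivity) (by linarith)))
  have hsplit : (∫ x in a..b, ∫ y in c..d, f x y)
        - (∑ i ∈ Finset.range m, ∑ j ∈ Finset.range n,
            f (mid i) (c + ((j : ℝ) + 1 / 2) * Δy)) * (Δx * Δy)
      = ((∫ x in a..b, ∫ y in c..d, f x y)
        - (∑ i ∈ Finset.range m, ∫ y in c..d, f (mid i) y) * Δx)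
      + Δx * ∑ i ∈ Finset.range m, ((∫ y in c..d, f (mid i) y)
        - (∑ j ∈ Finset.range n, f (mid i) (c + ((j : ℝ) + 1 / 2) * Δy)) * Δy) := by
    rw [Finset.sum_sub_distrib, ← Finset.sum_mul]
    ring
  calc _ ≤ K * (d - c) * (b - a) ^ 2 / (4 * m) + Δx * (m * (L * (d - c) ^ 2 / (4 * n))) := by
        rw [hsplit]
        refine (abs_add_le _ _).trans (add_le_add houter ?_)
        rw [abs_mul, abs_of_nonneg (by positivity)]
        gcongr
        simpa only [Finset.card_range] using Finset.abs_sum_le_card_mul hinner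
    _ = K * (b - a) ^ 2 * (d - c) / (4 * m) + L * (b - a) * (d - c) ^ 2 / (4 * n) := by
        rw [hΔx]
        field_simp

theorem stmt_7_general (a b c d : ℝ) (hab : a < b) (hcd : c < d)
    (m n : ℕ) (hm : 0 < m) (hn : 0 < n)
    (f fx fy fxy : ℝ → ℝ → ℝ)
    (hfx : ∀ x ∈ Icc a b, ∀ y ∈ Icc c d, HasDerivAt (fun x' => f x' y) (fx x y) x)
    (hfy : ∀ x ∈ Icc a b, ∀ y ∈ Icc c d, HasDerivAt (fun y' => f x y') (fy x y) y)
    (M N : ℝ)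
    (hM : ∀ x ∈ Icc a b, ∀ y ∈ Icc c d, Real.sqrt ((fx x y) ^ 2 + (fy x y) ^ 2) ≤ M)
    (hN : ∀ x ∈ Icc a b, ∀ y ∈ Icc c d, |fxy x y| ≤ N)
    (E : ℝ)
    (hE : (∫ x in a..b, ∫ y in c..d, f x y)
        = (∑ i ∈ Finset.range m, ∑ j ∈ Finset.range n,
            f (a + ((i : ℝ) + 1 / 2) * ((b - a) / m)) (c + ((j : ℝ) + 1 / 2) * ((d - c) / n)))
          * ((b - a) * (d - c) / (m * n)) + E) :
    |E| ≤ M * (b - a) ^ 2 * (d - c) / (4 * m) + M * (b - a) * (d - c) ^ 2 / (4 * n)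
        + N * (b - a) ^ 2 * (d - c) ^ 2 / (4 * m * n) := by
  have hac : a ∈ Icc a b := left_mem_Icc.2 hab.le
  have hcc : c ∈ Icc c d := left_mem_Icc.2 hcd.le
  have hM₀ : 0 ≤ M := (Real.sqrt_nonneg _).trans (hM a hac c hcc)
  have hN₀ : 0 ≤ N := (abs_nonneg _).trans (hN a hac c hcc)
  have hlip_x : ∀ y ∈ Icc c d, LipschitzOnWith M.toNNReal (fun x => f x y) (Icc a b) :=
    fun y hy => lipschitzOnWith_of_hasDerivAt_of_abs_le (convex_Icc a b)
      (fun x hx => hfx x hx y hy) fun x hx =>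
        (Real.abs_le_sqrt (le_add_of_nonneg_right (sq_nonneg _))).trans (hM x hx y hy)
  have hlip_y : ∀ x ∈ Icc a b, LipschitzOnWith M.toNNReal (f x) (Icc c d) :=
    fun x hx => lipschitzOnWith_of_hasDerivAt_of_abs_le (convex_Icc c d)
      (fun y hy => hfy x hx y hy) fun y hy =>
        (Real.abs_le_sqrt (le_add_of_nonneg_left (sq_nonneg _))).trans (hM x hx y hy)
  have hbound := abs_integral_integral_sub_midpoint_sum_le hab.le hcd.le hm hn hlip_x hlip_y
  rw [Real.coe_toNNReal _ hM₀, div_mul_div_comm, hE, add_sub_cancel_left] at hbound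
  exact hbound.trans (le_add_of_nonneg_right (by positivity))

/-- Composite midpoint rule error bound under uniform gradient bounds. -/
theorem stmt_7 (a b c d : ℝ) (hab : a < b) (hcd : c < d)
    (m n : ℕ) (hm : 0 < m) (hn : 0 < n)
    (f fx fy fxy : ℝ → ℝ → ℝ)
(hfC : ContinuousOn (fun p : ℝ × ℝ => f p.1 p.2) (Icc a b ×ˢ Icc c d))
    (hfx : ∀ x ∈ Icc a b, ∀ y ∈ Icc c d, HasDerivAt (fun x' => f x' y) (fx x y) x)
    (hfy : ∀ x ∈ Icc a b, ∀ y ∈ Icc c d, HasDerivAt (fun y' => f x y') (fy x y) y)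
    (hfxy : ∀ x ∈ Icc a b, ∀ y ∈ Icc c d, HasDerivAt (fun y' => fx x y') (fxy x y) y)
    (hfxC : ContinuousOn (fun p : ℝ × ℝ => fx p.1 p.2) (Icc a b ×ˢ Icc c d))
    (hfyC : ContinuousOn (fun p : ℝ × ℝ => fy p.1 p.2) (Icc a b ×ˢ Icc c d))
    (hfxyC : ContinuousOn (fun p : ℝ × ℝ => fxy p.1 p.2) (Icc a b ×ˢ Icc c d))
    (M N : ℝ)
    (hM : ∀ x ∈ Icc a b, ∀ y ∈ Icc c d, Real.sqrt ((fx x y) ^ 2 + (fy x y) ^ 2) ≤ M)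
    (hN : ∀ x ∈ Icc a b, ∀ y ∈ Icc c d, |fxy x y| ≤ N)
    (E : ℝ)
    (hE : (∫ x in a..b, ∫ y in c..d, f x y)
        = (∑ i ∈ Finset.range m, ∑ j ∈ Finset.range n,
            f (a + ((i : ℝ) + 1 / 2) * ((b - a) / m)) (c + ((j : ℝ) + 1 / 2) * ((d - c) / n)))
          * ((b - a) * (d - c) / (m * n)) + E) :
    |E| ≤ M * (b - a) ^ 2 * (d - c) / (4 * m) + M * (b - a) * (d - c) ^ 2 / (4 * n)
        + N * (b - a) ^ 2 * (d - c) ^ 2 / (4 * m * n) :=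
  stmt_7_general a b c d hab hcd m n hm hn f fx fy fxy hfx hfy M N hM hN E hE
end

section
/- Let α, β : [−1,1] → ℝ be arbitrary functions and define φ(s,t) = st + α(s) + β(t) on [−1,1]². Then sup_{(s,t)∈[−1,1]²} |φ(s,t)| ≥ 1. Moreover the value 1 is attained by taking α = β = 0, so the minimum over all α, β of the sup norm of st + α(s) + β(t) equals 1. -/
open Set

/-- The sup norm of st + α(s) + β(t) on [-1,1]² is at least 1, with minimum 1 at α = β = 0. -/
theorem stmt_13 (α β : ℝ → ℝ) :
    (∀ K : ℝ, (∀ s ∈ Icc (-1 : ℝ) 1, ∀ t ∈ Icc (-1 : ℝ) 1,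
        |s * t + α s + β t| ≤ K) → 1 ≤ K)
    ∧ sSup ((fun p : ℝ × ℝ => |p.1 * p.2|) '' (Icc (-1 : ℝ) 1 ×ˢ Icc (-1 : ℝ) 1)) = 1 := by
  constructor
  · intro K hK
    have h1 : (1:ℝ) ∈ Icc (-1:ℝ) 1 := by norm_num
    have hm : (-1:ℝ) ∈ Icc (-1:ℝ) 1 := by norm_num
    have A := hK 1 h1 1 h1
    have B := hK (-1) hm (-1) hm
    have C := hK 1 h1 (-1) hm
    have D := hK (-1) hm 1 h1
    rw [abs_le] at A B C D
    norm_num at A B C D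
    linarith [A.1, A.2, B.1, B.2, C.1, C.2, D.1, D.2]
  · apply le_antisymm
    · apply Real.sSup_le
      · rintro x ⟨⟨s, t⟩, ⟨hs, ht⟩, rfl⟩
        simp only [mem_Icc] at hs ht
        calc |s * t| = |s| * |t| := abs_mul s t
          _ ≤ 1 * 1 := by
              apply mul_le_mul (abs_le.2 ⟨hs.1, hs.2⟩) (abs_le.2 ⟨ht.1, ht.2⟩)
                (abs_nonneg t) zero_le_one
          _ = 1 := by ring
      · norm_num
    · apply le_csSup
      · refine ⟨1, ?_⟩
        rintro x ⟨⟨s, t⟩, ⟨hs, ht⟩, rfl⟩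
        simp only [mem_Icc] at hs ht
        calc |s * t| = |s| * |t| := abs_mul s t
          _ ≤ 1 * 1 := mul_le_mul (abs_le.2 ⟨hs.1, hs.2⟩) (abs_le.2 ⟨ht.1, ht.2⟩)
              (abs_nonneg t) zero_le_one
          _ = 1 := by ring
      · refine ⟨(1, 1), ?_, by norm_num⟩
        constructor <;> constructor <;> norm_num
end

section
/- The function φ(s,t) = st − |s| + |t| on [−1,1]² satisfies sup_{(s,t)∈[−1,1]²} |φ(s,t)| = 1. Hence the minimizer of the sup norm among functions of the form st + α(s) + β(t) on [−1,1]² is not unique (both (s,t) ↦ st and φ achieve the minimal norm 1). -/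
open Set

/-- φ(s,t) = st - |s| + |t| has sup norm 1 on [-1,1]², so the minimizer is not unique. -/
theorem stmt_14 :
    sSup ((fun p : ℝ × ℝ => abs (p.1 * p.2 - |p.1| + |p.2|)) ''
        (Icc (-1 : ℝ) 1 ×ˢ Icc (-1 : ℝ) 1)) = 1
    ∧ sSup ((fun p : ℝ × ℝ => |p.1 * p.2|) '' (Icc (-1 : ℝ) 1 ×ˢ Icc (-1 : ℝ) 1)) = 1
    ∧ ∃ p ∈ Icc (-1 : ℝ) 1 ×ˢ Icc (-1 : ℝ) 1,
        p.1 * p.2 - |p.1| + |p.2| ≠ p.1 * p.2 := by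
  refine ⟨?_, ?_, ⟨(1, 0), by norm_num [Prod.le_def], by norm_num [Prod.le_def]⟩⟩
  · apply IsGreatest.csSup_eq
    constructor
    · exact ⟨(0, 1), by norm_num [Prod.le_def]⟩
    · rintro x ⟨⟨s, t⟩, ⟨⟨hs1, hs2⟩, ht1, ht2⟩, rfl⟩
      simp only
      rw [abs_le]
      rcases abs_cases s with ⟨h1, h2⟩ <;> rcases abs_cases t with ⟨h3, h4⟩ <;>
        constructor <;> nlinarith
  · apply IsGreatest.csSup_eq
    constructor
    · exact ⟨(1, 1), by norm_num [Prod.le_def]⟩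
    · rintro x ⟨⟨s, t⟩, ⟨⟨hs1, hs2⟩, ht1, ht2⟩, rfl⟩
      simp only
      rw [abs_le]
      constructor <;> nlinarith
end

section
/- For every α, β ∈ L¹([−1,1]), ∫_{−1}^1∫_{−1}^1 |st + α(s) + β(t)| dt ds ≥ 1, with equality when α = β = 0 (since ∫_{−1}^1∫_{−1}^1 |st| dt ds = 1). Hence min over α, β ∈ L¹([−1,1]) of the L¹ norm of (s,t) ↦ st + α(s) + β(t) over [−1,1]² equals 1. -/
/-!
For `f s t = s * t + α s + β t` the mixed second difference
`f s t - f (-s) t - f s (-t) + f (-s) (-t) = 4 * s * t` does not see `α` and `β`. By the triangle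
inequality the four values `|f (±s) (±t)|` therefore sum to at least `4 * |s * t|`, and since the
square `[-1, 1]²` is symmetric under `s ↦ -s` and `t ↦ -t`, integrating this over the square
(first in `t`, then in `s`) gives `4 * ∫∫ |f| ≥ 4 * ∫∫ |s * t| = 4`.
-/

open MeasureTheory Set intervalIntegral

theorem integral_abs_eq_sq {a : ℝ} (ha : 0 ≤ a) : ∫ x in -a..a, |x| = a ^ 2 := by
  have hneg : ∫ x in -a..0, |x| = ∫ x in (0 : ℝ)..a, x := by
    rw [← neg_zero, ← integral_comp_neg, neg_zero]
    exact integral_congr fun x hx => by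
      rw [uIcc_of_le ha] at hx
      simp [abs_of_nonneg hx.1]
  have hpos : ∫ x in (0 : ℝ)..a, |x| = ∫ x in (0 : ℝ)..a, x :=
    integral_congr fun x hx => by
      rw [uIcc_of_le ha] at hx
      exact abs_of_nonneg hx.1
  rw [← integral_add_adjacent_intervals (b := 0) (continuous_abs.intervalIntegrable _ _)
    (continuous_abs.intervalIntegrable _ _), hneg, hpos, integral_id]
  ring

theorem four_mul_abs_le_abs_add_abs_add_abs_add_abs (x a a' b b' : ℝ) :
    4 * |x| ≤ |x + a + b| + |-x + a' + b| + |-x + a + b'| + |x + a' + b'| := by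
  have hx : 4 * x = (x + a + b) - (-x + a' + b) - (-x + a + b') + (x + a' + b') := by ring
  calc 4 * |x| = |(x + a + b) - (-x + a' + b) - (-x + a + b') + (x + a' + b')| := by
        rw [← hx, abs_mul, abs_of_pos (four_pos : (0 : ℝ) < 4)]
    _ ≤ _ := by
      refine (abs_add_le _ _).trans ?_
      gcongr
      refine (abs_sub _ _).trans ?_
      gcongr
      exact abs_sub _ _

theorem integral_le_two_mul_integral_of_le_add_comp_neg {a : ℝ} (ha : 0 ≤ a) {f g : ℝ → ℝ}
    (hf : IntervalIntegrable f volume (-a) a) (hg : IntervalIntegrable g volume (-a) a)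
    (hfg : ∀ x, f x ≤ g x + g (-x)) : ∫ x in -a..a, f x ≤ 2 * ∫ x in -a..a, g x := by
  have hg_neg : IntervalIntegrable (fun x => g (-x)) volume (-a) a := by
    simpa using (IntervalIntegrable.iff_comp_neg (by simp)).mp hg.symm
  calc ∫ x in -a..a, f x ≤ ∫ x in -a..a, (g x + g (-x)) :=
        integral_mono_on (by linarith) hf (hg.add hg_neg) fun x _ => hfg x
    _ = 2 * ∫ x in -a..a, g x := by
        rw [integral_add hg hg_neg, integral_comp_neg, neg_neg]
        ring

theorem intervalIntegrable_integral_abs_mul_add_add {a b : ℝ} (hab : a ≤ b) {α β : ℝ → ℝ}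
    (hα : IntervalIntegrable α volume a b) (hβ : IntervalIntegrable β volume a b) :
    IntervalIntegrable (fun s => ∫ t in a..b, |s * t + α s + β t|) volume a b := by
  rw [intervalIntegrable_iff_integrableOn_Ioc_of_le hab] at hα hβ ⊢
  set μ := volume.restrict (Ioc a b)
  have hid : Integrable (fun x : ℝ => x) μ :=
    (intervalIntegrable_iff_integrableOn_Ioc_of_le hab).mp
      (continuous_id.intervalIntegrable a b)
  have hF : Integrable (fun z : ℝ × ℝ => z.1 * z.2 + α z.1 + β z.2) (μ.prod μ) :=
    ((hid.mul_prod hid).add (hα.comp_fst μ)).add (hβ.comp_snd μ)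
  simp only [integral_of_le hab]
  have h := hF.integral_norm_prod_left
  simp only [Real.norm_eq_abs] at h
  exact h

theorem two_mul_abs_le_integral_abs_add_integral_abs_neg {α β : ℝ → ℝ}
    (hβ : IntervalIntegrable β volume (-1) 1) (s : ℝ) :
    2 * |s| ≤ (∫ t in (-1 : ℝ)..1, |s * t + α s + β t|) +
      ∫ t in (-1 : ℝ)..1, |-s * t + α (-s) + β t| := by
  have hint (r : ℝ) : IntervalIntegrable (fun t => |r * t + α r + β t|) volume (-1) 1 :=
    ((((continuous_const_mul r).add continuous_const).intervalIntegrable _ _).add hβ).abs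
  have h := integral_le_two_mul_integral_of_le_add_comp_neg zero_le_one
    (f := fun t => 4 * |s * t|)
    (continuous_const.mul (continuous_const_mul s).abs |>.intervalIntegrable _ _)
    ((hint s).add (hint (-s))) fun t => by
      have := four_mul_abs_le_abs_add_abs_add_abs_add_abs (s * t) (α s) (α (-s)) (β t) (β (-t))
      simp only [mul_neg, neg_mul, neg_neg] at this ⊢
      linarith
  simp only [abs_mul, intervalIntegral.integral_const_mul, integral_abs_eq_sq zero_le_one,
    integral_add (hint s) (hint (-s))] at h
  linarith

/-- L¹ minimization: the L¹ norm of st + α(s) + β(t) on [-1,1]² is at least 1,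
with equality at α = β = 0. -/
theorem stmt_15 (α β : ℝ → ℝ)
    (hα : Integrable α (volume.restrict (Icc (-1 : ℝ) 1)))
    (hβ : Integrable β (volume.restrict (Icc (-1 : ℝ) 1))) :
    (∫ s in (-1 : ℝ)..1, ∫ t in (-1 : ℝ)..1, |s * t + α s + β t|) ≥ 1
    ∧ (∫ s in (-1 : ℝ)..1, ∫ t in (-1 : ℝ)..1, |s * t|) = 1 := by
  have hα' : IntervalIntegrable α volume (-1) 1 :=
    (intervalIntegrable_iff_integrableOn_Icc_of_le (by norm_num)).mpr hα
  have hβ' : IntervalIntegrable β volume (-1) 1 :=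
    (intervalIntegrable_iff_integrableOn_Icc_of_le (by norm_num)).mpr hβ
  have habs : ∫ s in (-1 : ℝ)..1, 2 * |s| = 2 := by
    rw [intervalIntegral.integral_const_mul, integral_abs_eq_sq zero_le_one]
    norm_num
  have h := integral_le_two_mul_integral_of_le_add_comp_neg zero_le_one (f := fun s => 2 * |s|)
    (continuous_const.mul continuous_abs |>.intervalIntegrable _ _)
    (intervalIntegrable_integral_abs_mul_add_add (by norm_num) hα' hβ')
    (two_mul_abs_le_integral_abs_add_integral_abs_neg hβ')
  refine ⟨by linarith, ?_⟩
  simp only [abs_mul, intervalIntegral.integral_const_mul, integral_abs_eq_sq zero_le_one, one_pow,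
    mul_one]
end

section
/- Let g : [a,b] → ℝ be continuously differentiable, m = (a+b)/2, and let 1 < p < ∞ with conjugate exponent q (1/p + 1/q = 1). Then |∫_a^b g(x) dx − (g(a)+g(b))(b−a)/2| ≤ (1/2)(q+1)^{−1/q} ‖g'‖_p (b−a)^{1+1/q}, where ‖g'‖_p = (∫_a^b |g'(x)|^p dx)^{1/p}. -/
/-!
Integrating by parts against `x - m`, whose derivative is `1` and which takes the values
`∓(b - a)/2` at the endpoints, turns the trapezoid error into `-∫ g'(x) (x - m) dx`. Hölder's
inequality bounds this by `‖g'‖_p ‖x - m‖_q`, and `‖x - m‖_q` is computed explicitly.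
-/

open MeasureTheory Set

theorem ContinuousOn.memLp_restrict_of_isCompact {X E : Type*} [TopologicalSpace X]
    [MeasurableSpace X] [OpensMeasurableSpace X] [T2Space X] [NormedAddCommGroup E]
    [SecondCountableTopologyEither X E] {μ : Measure X} [IsFiniteMeasureOnCompacts μ]
    {f : X → E} {K : Set X} (hK : IsCompact K) (hf : ContinuousOn f K) (p : ENNReal) :
    MemLp f p (μ.restrict K) := by
  obtain ⟨C, hC⟩ := hK.exists_bound_of_continuousOn hf
  have : IsFiniteMeasure (μ.restrict K) := isFiniteMeasure_restrict.2 hK.measure_ne_top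
  exact MemLp.of_bound (hf.aestronglyMeasurable hK.measurableSet) C
    (ae_restrict_of_forall_mem hK.measurableSet hC)

namespace intervalIntegral

theorem integral_sub_trapezoid_eq {a b : ℝ} {g g' : ℝ → ℝ}
    (hg : ∀ x ∈ uIcc a b, HasDerivAt g (g' x) x) (hg' : IntervalIntegrable g' volume a b) :
    (∫ x in a..b, g x) - (g a + g b) * (b - a) / 2
      = -∫ x in a..b, g' x * (x - (a + b) / 2) := by
  have hparts := integral_mul_deriv_eq_deriv_mul (v := fun x => x - (a + b) / 2) hg
    (fun x _ => (hasDerivAt_id x).sub_const _) hg' intervalIntegrable_const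
  simp only [mul_one] at hparts
  rw [hparts]
  ring

theorem abs_integral_mul_le_Lp_mul_Lq {a b p q : ℝ} {f h : ℝ → ℝ}
    (hab : a ≤ b) (hpq : p.HolderConjugate q)
    (hf : MemLp f (ENNReal.ofReal p) (volume.restrict (Ioc a b)))
    (hh : MemLp h (ENNReal.ofReal q) (volume.restrict (Ioc a b))) :
    |∫ x in a..b, f x * h x|
      ≤ (∫ x in a..b, |f x| ^ p) ^ (1 / p) * (∫ x in a..b, |h x| ^ q) ^ (1 / q) := by
  simp only [integral_of_le hab]
  calc |∫ x in Ioc a b, f x * h x|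
      ≤ ∫ x in Ioc a b, ‖f x‖ * ‖h x‖ := by
        simpa only [← abs_mul, Real.norm_eq_abs] using
          MeasureTheory.norm_integral_le_integral_norm (f := fun x => f x * h x)
    _ ≤ _ := by
        simpa only [Real.norm_eq_abs] using integral_mul_norm_le_Lp_mul_Lq hpq hf hh

theorem integral_abs_rpow_neg_self {c q : ℝ} (hc : 0 ≤ c) (hq : 0 ≤ q) :
    ∫ x in -c..c, |x| ^ q = 2 * (c ^ (q + 1) / (q + 1)) := by
  have hcont : Continuous fun x : ℝ => |x| ^ q := continuous_abs.rpow_const fun _ => Or.inr hq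
  have half : ∫ x in (0 : ℝ)..c, |x| ^ q = c ^ (q + 1) / (q + 1) := by
    rw [integral_congr fun x hx => by rw [abs_of_nonneg (uIcc_of_le hc ▸ hx).1],
      integral_rpow (Or.inl (by linarith)), Real.zero_rpow (by linarith), sub_zero]
  rw [← integral_add_adjacent_intervals (hcont.intervalIntegrable _ 0)
    (hcont.intervalIntegrable 0 _), ← neg_zero, ← integral_comp_neg]
  simp only [abs_neg, neg_zero, half]
  ring

theorem integral_abs_sub_midpoint_rpow_rpow_one_div {a b q : ℝ} (hab : a ≤ b)
    (hq : 0 < q) :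
    (∫ x in a..b, |x - (a + b) / 2| ^ q) ^ (1 / q)
      = 1 / 2 * (q + 1) ^ (-(1 / q)) * (b - a) ^ (1 + 1 / q) := by
  have hc : 0 ≤ (b - a) / 2 := by linarith
  have hq1 : 0 < q + 1 := by linarith
  rw [integral_comp_sub_right (fun x => |x| ^ q), show a - (a + b) / 2 = -((b - a) / 2) by ring,
    show b - (a + b) / 2 = (b - a) / 2 by ring, integral_abs_rpow_neg_self hc hq.le]
  calc (2 * (((b - a) / 2) ^ (q + 1) / (q + 1))) ^ (1 / q)
      = 2 ^ (1 / q) * (((b - a) / 2) ^ (q + 1)) ^ (1 / q) * ((q + 1) ^ (1 / q))⁻¹ := by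
        rw [div_eq_mul_inv, Real.mul_rpow (by norm_num) (by positivity),
          Real.mul_rpow (by positivity) (by positivity), Real.inv_rpow hq1.le, mul_assoc]
    _ = 2 ^ (1 / q) * ((b - a) / 2) ^ (1 + 1 / q) * (q + 1) ^ (-(1 / q)) := by
        rw [← Real.rpow_mul hc, ← Real.rpow_neg hq1.le]
        congr 3
        field_simp
    _ = (b - a) ^ (1 + 1 / q) * 2 ^ (1 / q - (1 + 1 / q)) * (q + 1) ^ (-(1 / q)) := by
        rw [Real.div_rpow (by linarith) zero_le_two, Real.rpow_sub zero_lt_two]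
        ring
    _ = 1 / 2 * (q + 1) ^ (-(1 / q)) * (b - a) ^ (1 + 1 / q) := by
        rw [show 1 / q - (1 + 1 / q) = -1 by ring, Real.rpow_neg_one]
        ring

end intervalIntegral

/-- One-variable trapezoidal rule L^p error bound, 1 < p < ∞. -/
theorem stmt_17 (a b : ℝ) (hab : a < b) (p q : ℝ) (hp : 1 < p) (hpq : 1 / p + 1 / q = 1)
    (g g' : ℝ → ℝ)
    (hg : ∀ x ∈ Icc a b, HasDerivAt g (g' x) x)
    (hg' : ContinuousOn g' (Icc a b)) :
    |(∫ x in a..b, g x) - (g a + g b) * (b - a) / 2|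
      ≤ (1 / 2) * (q + 1) ^ (-(1 / q)) * (∫ x in a..b, |g' x| ^ p) ^ (1 / p)
          * (b - a) ^ (1 + 1 / q) := by
  have hpq' : p.HolderConjugate q :=
    Real.holderConjugate_iff.mpr ⟨hp, by simpa only [one_div] using hpq⟩
  have memLp {f : ℝ → ℝ} (hf : ContinuousOn f (Icc a b)) (r : ENNReal) :
      MemLp f r (volume.restrict (Ioc a b)) :=
    (hf.memLp_restrict_of_isCompact isCompact_Icc r).mono_measure
      (Measure.restrict_mono Ioc_subset_Icc_self le_rfl)
  rw [intervalIntegral.integral_sub_trapezoid_eq (uIcc_of_le hab.le ▸ hg)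
    (hg'.intervalIntegrable_of_Icc hab.le), abs_neg]
  calc _ ≤ (∫ x in a..b, |g' x| ^ p) ^ (1 / p)
        * (∫ x in a..b, |x - (a + b) / 2| ^ q) ^ (1 / q) :=
        intervalIntegral.abs_integral_mul_le_Lp_mul_Lq hab.le hpq' (memLp hg' _)
          (memLp (continuousOn_id.sub continuousOn_const) _)
    _ = _ := by
        rw [intervalIntegral.integral_abs_sub_midpoint_rpow_rpow_one_div hab.le hpq'.symm.pos]
        ring
end

section
/- For any real number u > 0 and any v > 0, the function φ(s,t) = st + u|s|^v − u|t|^v on [−1,1]² satisfies sup_{(s,t)∈[−1,1]²} |φ(s,t)| ≥ 1, and equality sup |φ| = 1 holds in particular when u = v = 1. -/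
open Set

/-- φ(s,t) = st + u|s|^v - u|t|^v has sup norm at least 1 on [-1,1]²,
with equality when u = v = 1. -/
theorem stmt_19 (u v : ℝ) (hu : 0 < u) (hv : 0 < v) :
    sSup ((fun p : ℝ × ℝ => abs (p.1 * p.2 + u * |p.1| ^ v - u * |p.2| ^ v)) ''
        (Icc (-1 : ℝ) 1 ×ˢ Icc (-1 : ℝ) 1)) ≥ 1
    ∧ sSup ((fun p : ℝ × ℝ => abs (p.1 * p.2 + |p.1| - |p.2|)) ''
        (Icc (-1 : ℝ) 1 ×ˢ Icc (-1 : ℝ) 1)) = 1 := by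
  have hmem : ((1 : ℝ), (1 : ℝ)) ∈ Icc (-1 : ℝ) 1 ×ˢ Icc (-1 : ℝ) 1 := by
    constructor <;> constructor <;> norm_num
  constructor
  · -- sup ≥ 1 : value at (1,1) is 1, and set is bounded above
    have hbdd : BddAbove ((fun p : ℝ × ℝ =>
        abs (p.1 * p.2 + u * |p.1| ^ v - u * |p.2| ^ v)) ''
        (Icc (-1 : ℝ) 1 ×ˢ Icc (-1 : ℝ) 1)) := by
      refine ⟨1 + 2 * u, ?_⟩
      rintro x ⟨⟨s, t⟩, ⟨⟨hs1, hs2⟩, ht1, ht2⟩, rfl⟩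
      simp only
      have hs : |s| ≤ 1 := abs_le.mpr ⟨hs1, hs2⟩
      have ht : |t| ≤ 1 := abs_le.mpr ⟨ht1, ht2⟩
      have hsp : |s| ^ v ≤ 1 := Real.rpow_le_one (abs_nonneg s) hs hv.le
      have htp : |t| ^ v ≤ 1 := Real.rpow_le_one (abs_nonneg t) ht hv.le
      have hsp0 : 0 ≤ |s| ^ v := Real.rpow_nonneg (abs_nonneg s) v
      have htp0 : 0 ≤ |t| ^ v := Real.rpow_nonneg (abs_nonneg t) v
      have hst : |s * t| ≤ 1 := by
        rw [abs_mul]; nlinarith [abs_nonneg s, abs_nonneg t]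
      have := abs_mul s t
      rw [abs_le] at hst
      rw [abs_le]
      constructor <;> nlinarith
    have h1 : (1 : ℝ) ∈ (fun p : ℝ × ℝ =>
        abs (p.1 * p.2 + u * |p.1| ^ v - u * |p.2| ^ v)) ''
        (Icc (-1 : ℝ) 1 ×ˢ Icc (-1 : ℝ) 1) := by
      refine ⟨(1, 1), hmem, ?_⟩
      simp [Real.one_rpow]
    exact le_csSup hbdd h1
  · apply le_antisymm
    · refine csSup_le ⟨1, ⟨(1, 1), hmem, by norm_num⟩⟩ ?_
      rintro x ⟨⟨s, t⟩, ⟨⟨hs1, hs2⟩, ht1, ht2⟩, rfl⟩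
      simp only
      have hs : |s| ≤ 1 := abs_le.mpr ⟨hs1, hs2⟩
      have ht : |t| ≤ 1 := abs_le.mpr ⟨ht1, ht2⟩
      have hst : |s * t| ≤ |s| * |t| := le_of_eq (abs_mul s t)
      rw [abs_le] at hst
      rw [abs_le]
      constructor <;> nlinarith [abs_nonneg s, abs_nonneg t]
    · refine le_csSup ?_ ⟨(1, 1), hmem, by norm_num⟩
      refine ⟨3, ?_⟩
      rintro x ⟨⟨s, t⟩, ⟨⟨hs1, hs2⟩, ht1, ht2⟩, rfl⟩
      simp only
      have hs : |s| ≤ 1 := abs_le.mpr ⟨hs1, hs2⟩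
      have ht : |t| ≤ 1 := abs_le.mpr ⟨ht1, ht2⟩
      have hst : |s * t| ≤ |s| * |t| := le_of_eq (abs_mul s t)
      rw [abs_le] at hst
      rw [abs_le]
      constructor <;> nlinarith [abs_nonneg s, abs_nonneg t]
end
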